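/- arXiv:1601.08231 — 7 statements merged into one kernel-verified Lean document; each statement's English description precedes it below -/
import Mathlib

section
/- In any associative unital k-algebra containing elements T_1,...,T_n satisfying the type-A braid relations (T_i T_{i+1} T_i = T_{i+1} T_i T_{i+1}, and T_i T_j = T_j T_i for |i-j|>1) together with T_1^2 = 0, the element (T_n T_{n-1} ⋯ T_1)^2 equals 0. -/
/-- The descending product `T_b T_{b-1} ⋯ T_a` (empty when `a > b`). -/
def downProd {A : Type} [Monoid A] (T : ℕ → A) (a b : ℕ) : A :=
  ((List.range' a (b + 1 - a)).reverse.map T).prod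

/-!
Write `D = T_n ⋯ T_1`. The braid relations give `D T_{j+1} = T_j D` for `1 ≤ j < n`, so `D`
slides through `T_n ⋯ T_2` to give `D (T_n ⋯ T_2) = (T_{n-1} ⋯ T_1) D`. Hence
`D² = D (T_n ⋯ T_2) T_1 = (T_{n-1} ⋯ T_1) (T_n ⋯ T_2) T_1²`, which vanishes.
-/

section DownProd

variable {A : Type} [Monoid A] (T : ℕ → A)

theorem downProd_of_lt {a b : ℕ} (h : b < a) : downProd T a b = 1 := by
  simp [downProd, Nat.sub_eq_zero_of_le h]

theorem downProd_self (a : ℕ) : downProd T a a = T a := by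
  simp [downProd]

theorem downProd_mul_downProd {a b c : ℕ} (hac : a ≤ c + 1) (hcb : c ≤ b) :
    downProd T (c + 1) b * downProd T a c = downProd T a b := by
  have hsplit : List.range' a (c + 1 - a) ++ List.range' (c + 1) (b + 1 - (c + 1)) =
      List.range' a (b + 1 - a) := by
    have h := List.range'_append_1 (s := a) (m := c + 1 - a) (n := b + 1 - (c + 1))
    rwa [Nat.add_sub_cancel' hac, show c + 1 - a + (b + 1 - (c + 1)) = b + 1 - a by omega] at h
  rw [downProd, downProd, downProd, ← hsplit, List.reverse_append, List.map_append,
    List.prod_append]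

theorem downProd_succ {a b : ℕ} (h : a ≤ b + 1) :
    downProd T a (b + 1) = T (b + 1) * downProd T a b := by
  rw [← downProd_mul_downProd T h b.le_succ, downProd_self]

theorem commute_downProd_right {x : A} {a b : ℕ}
    (h : ∀ j, a ≤ j → j ≤ b → Commute x (T j)) : Commute x (downProd T a b) := by
  refine Commute.list_prod_right _ _ fun y hy => ?_
  simp only [List.mem_map, List.mem_reverse, List.mem_range'_1] at hy
  obtain ⟨j, hj, rfl⟩ := hy
  exact h j hj.1 (by omega)

end DownProd

theorem semiconjBy_of_braid {M : Type*} [Monoid M] {x y q : M} (hbraid : y * x * y = x * y * x)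
    (hq : Commute q x) : SemiconjBy (x * y * q) x y :=
  calc x * y * q * x = x * y * x * q := by rw [mul_assoc _ q, hq.eq, ← mul_assoc]
    _ = y * (x * y * q) := by rw [← hbraid]; simp only [mul_assoc]

section Braid

variable {A : Type} [Monoid A] {T : ℕ → A} {n : ℕ}
  (hbraid : ∀ i, 1 ≤ i → i + 1 ≤ n → T i * T (i + 1) * T i = T (i + 1) * T i * T (i + 1))
  (hcomm : ∀ i j, 1 ≤ i → i + 1 < j → j ≤ n → T i * T j = T j * T i)
include hbraid hcomm

theorem semiconjBy_downProd_shift {i : ℕ} (hi : i + 2 ≤ n) :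
    SemiconjBy (downProd T 1 n) (T (i + 2)) (T (i + 1)) := by
  have hlow : SemiconjBy (downProd T 1 (i + 2)) (T (i + 2)) (T (i + 1)) := by
    rw [downProd_succ T (by omega), downProd_succ T (by omega), ← mul_assoc]
    refine semiconjBy_of_braid (hbraid (i + 1) (by omega) hi) ?_
    exact (commute_downProd_right T fun j hj _ =>
      Commute.symm (hcomm j (i + 2) hj (by omega) hi)).symm
  have hhigh : Commute (T (i + 1)) (downProd T (i + 3) n) :=
    commute_downProd_right T fun j hij hjn => hcomm (i + 1) j (by omega) (by omega) hjn
  rw [← downProd_mul_downProd T (by omega) hi]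
  exact SemiconjBy.mul_left hhigh.symm hlow

theorem semiconjBy_downProd_downProd {m : ℕ} (hm : m + 1 ≤ n) :
    SemiconjBy (downProd T 1 n) (downProd T 2 (m + 1)) (downProd T 1 m) := by
  induction m with
  | zero => simp only [downProd_of_lt, Nat.lt_add_one, SemiconjBy.one_right]
  | succ m ih =>
    rw [downProd_succ T (a := 2) (b := m + 1) (by omega),
      downProd_succ T (a := 1) (b := m) (by omega)]
    exact (semiconjBy_downProd_shift hbraid hcomm hm).mul_right (ih (by omega))

end Braid

theorem descending_word_squares_to_zero_general (A : Type) [Ring A]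
    (n : ℕ) (hn : 1 ≤ n) (T : ℕ → A)
    (hbraid : ∀ i, 1 ≤ i → i + 1 ≤ n →
      T i * T (i + 1) * T i = T (i + 1) * T i * T (i + 1))
    (hcomm : ∀ i j, 1 ≤ i → i + 1 < j → j ≤ n → T i * T j = T j * T i)
    (hT1 : T 1 ^ 2 = 0) :
    downProd T 1 n ^ 2 = 0 := by
  obtain ⟨m, rfl⟩ : ∃ m, n = m + 1 := ⟨n - 1, by omega⟩
  have hsplit : downProd T 1 (m + 1) = downProd T 2 (m + 1) * T 1 := by
    rw [← downProd_self T 1]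
    exact (downProd_mul_downProd T (a := 1) (c := 1) (Nat.le_succ 1) hn).symm
  have hslide := semiconjBy_downProd_downProd hbraid hcomm (le_refl (m + 1))
  calc downProd T 1 (m + 1) ^ 2 = downProd T 1 (m + 1) * downProd T 2 (m + 1) * T 1 := by
        rw [sq, hsplit, ← mul_assoc, ← hsplit]
    _ = downProd T 1 m * downProd T 2 (m + 1) * T 1 ^ 2 := by
        rw [hslide.eq, mul_assoc, hsplit, sq]; simp only [mul_assoc]
    _ = 0 := by rw [hT1, mul_zero]

/-- In any associative unital `k`-algebra containing `T_1, …, T_n` satisfying the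
type-`A` braid relations and `T_1^2 = 0`, one has `(T_n T_{n-1} ⋯ T_1)^2 = 0`. -/
theorem descending_word_squares_to_zero (k A : Type) [CommRing k] [Ring A] [Algebra k A]
    (n : ℕ) (hn : 1 ≤ n) (T : ℕ → A)
    (hbraid : ∀ i, 1 ≤ i → i + 1 ≤ n →
      T i * T (i + 1) * T i = T (i + 1) * T i * T (i + 1))
    (hcomm : ∀ i j, 1 ≤ i → i + 1 < j → j ≤ n → T i * T j = T j * T i)
    (hT1 : T 1 ^ 2 = 0) :
    downProd T 1 n ^ 2 = 0 :=
  descending_word_squares_to_zero_general A n hn T hbraid hcomm hT1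
end

section
/- Every nonzero product of generators in NC_A(n,d) either lies in the subalgebra generated by T_1,...,T_{n-1}, or can be rewritten using the defining relations in the standard form T_w T_n^k T_{n-1} T_{n-2} ⋯ T_m for some w ∈ S_n, 1 ≤ k ≤ d-1, and 1 ≤ m ≤ n. -/
/-- Relations of the generalized nil-Coxeter algebra `NC_A(n,d)` on generators
`T_1, …, T_n` (0-indexed by `Fin n`): type-`A_n` braid relations,
`T_i^2 = 0` for `i < n`, and `T_n^d = 0`. -/
inductive NCRel (k : Type) [CommRing k] (n d : ℕ) :
    FreeAlgebra k (Fin n) → FreeAlgebra k (Fin n) → Prop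
  | braid (i j : Fin n) (h : (i : ℕ) + 1 = j) :
      NCRel k n d (FreeAlgebra.ι k i * FreeAlgebra.ι k j * FreeAlgebra.ι k i)
        (FreeAlgebra.ι k j * FreeAlgebra.ι k i * FreeAlgebra.ι k j)
  | comm (i j : Fin n) (h : (i : ℕ) + 1 < j) :
      NCRel k n d (FreeAlgebra.ι k i * FreeAlgebra.ι k j)
        (FreeAlgebra.ι k j * FreeAlgebra.ι k i)
  | sq (i : Fin n) (h : (i : ℕ) + 1 < n) : NCRel k n d (FreeAlgebra.ι k i ^ 2) 0
  | last (i : Fin n) (h : (i : ℕ) + 1 = n) : NCRel k n d (FreeAlgebra.ι k i ^ d) 0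

/-- The generalized nil-Coxeter algebra `NC_A(n,d)`. -/
abbrev NCA (k : Type) [CommRing k] (n d : ℕ) := RingQuot (NCRel k n d)

/-- The generator `T_j` (1-indexed, for `1 ≤ j ≤ n`) of `NC_A(n,d)`. -/
noncomputable def Tg (k : Type) [CommRing k] (n d : ℕ) (j : ℕ) : NCA k n d :=
  if h : 1 ≤ j ∧ j ≤ n then
    RingQuot.mkAlgHom k (NCRel k n d) (FreeAlgebra.ι k ⟨j - 1, by omega⟩) else 1

/-- The descending product `T_{n-1} T_{n-2} ⋯ T_m` in `NC_A(n,d)`. -/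
noncomputable def descT (k : Type) [CommRing k] (n d : ℕ) (m : ℕ) : NCA k n d :=
  ((List.range' m (n - m)).reverse.map (Tg k n d)).prod

/-- The product of generators `T_{j}` along a (1-indexed) word `l`. -/
noncomputable def TwOf (k : Type) [CommRing k] (n d : ℕ) (l : List ℕ) : NCA k n d :=
  (l.map (Tg k n d)).prod

/-- The simple transposition `s_j = (j, j+1)` (1-indexed) in the symmetric group
on `{1, …, n}`, realized as `Equiv.Perm (Fin n)`. -/
def sp (n : ℕ) (j : ℕ) : Equiv.Perm (Fin n) :=
  if h : 1 ≤ j ∧ j < n then Equiv.swap ⟨j - 1, by omega⟩ ⟨j, h.2⟩ else 1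

/-- `l` is a reduced word for `w ∈ S_n` in the simple transpositions `s_1, …, s_{n-1}`. -/
def IsRedWord (n : ℕ) (w : Equiv.Perm (Fin n)) (l : List ℕ) : Prop :=
  (∀ j ∈ l, 1 ≤ j ∧ j < n) ∧ (l.map (sp n)).prod = w ∧
    ∀ l' : List ℕ, (∀ j ∈ l', 1 ≤ j ∧ j < n) → (l'.map (sp n)).prod = w →
      l.length ≤ l'.length

/-! Multiply the word out from the left, one generator at a time. The set formed by `0`, the
staircase words in `T_1, …, T_{n-1}` (the classical normal form of reduced words in `S_n`) and the
elements `T_c T_n^e T_{n-1} ⋯ T_m` is stable under right multiplication by a generator. For `T_j`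
with `j < n` this is the braid-and-square calculus of the nil-Coxeter algebra of type `A`, with
`T_j` either absorbed into the descending run, killed by `T_j^2 = 0`, or moved past the run and
past `T_n^e` into `T_c`. For `T_n` itself, `T_n^e T_{n-1} T_n` is `T_{n-1} T_n T_{n-1}` when
`e = 1` and `0` when `e ≥ 2`, while `T_n^d = 0` caps `e`. Staircase words are reduced because each
of their letters raises the inversion number of the permutation by one. -/

open Finset Equiv

lemma sq_mul_mul_eq_zero_of_braid {R : Type*} [MonoidWithZero R] {a b : R}
    (hab : a * b * a = b * a * b) (hb : b * b = 0) : a ^ 2 * b * a = 0 :=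
  calc a ^ 2 * b * a = a * (a * b * a) := by rw [pow_two]; simp only [mul_assoc]
    _ = a * (b * a * b) := by rw [hab]
    _ = a * b * a * b := by simp only [mul_assoc]
    _ = b * a * b * b := by rw [hab]
    _ = b * a * (b * b) := by simp only [mul_assoc]
    _ = 0 := by rw [hb, mul_zero]

namespace NCA

/-- `desc M m = [M-1, M-2, …, m]`, so that `descT k n d m = TwOf k n d (desc n m)`. -/
def desc (M m : ℕ) : List ℕ := (List.range' m (M - m)).reverse

lemma mem_desc {M m i : ℕ} : i ∈ desc M m ↔ m ≤ i ∧ i < M := by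
  simp only [desc, List.mem_reverse, List.mem_range'_1]
  omega

lemma desc_of_le {M m : ℕ} (h : M ≤ m) : desc M m = [] := by
  simp [desc, Nat.sub_eq_zero_of_le h]

lemma desc_succ {M m : ℕ} (h : m ≤ M) : desc (M + 1) m = M :: desc M m := by
  simp [desc, Nat.sub_add_comm h, List.range'_1_concat, Nat.add_sub_cancel' h]

lemma desc_eq_append_singleton {M m : ℕ} (h : m < M) : desc M m = desc M (m + 1) ++ [m] := by
  simp [desc, show M - m = M - (m + 1) + 1 by omega, List.range'_succ]

lemma desc_append {M j m : ℕ} (h₁ : m ≤ j) (h₂ : j ≤ M) :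
    desc M j ++ desc j m = desc M m := by
  have h := List.range'_append_1 (s := m) (m := j - m) (n := M - j)
  rw [Nat.add_sub_cancel' h₁, show j - m + (M - j) = M - m by omega] at h
  rw [desc, desc, desc, ← List.reverse_append, h]

lemma length_desc (M m : ℕ) : (desc M m).length = M - m := by
  simp [desc]

inductive IsStaircase : ℕ → List ℕ → Prop
  | nil : IsStaircase 0 []
  | snoc {M : ℕ} {c : List ℕ} {m : ℕ} :
      IsStaircase M c → 1 ≤ m → m ≤ M + 1 → IsStaircase (M + 1) (c ++ desc (M + 1) m)

lemma isStaircase_nil : ∀ M, IsStaircase M []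
  | 0 => .nil
  | M + 1 => by
    simpa [desc_of_le le_rfl] using (isStaircase_nil M).snoc (m := M + 1) (by omega) le_rfl

lemma IsStaircase.mem {M : ℕ} {c : List ℕ} (hc : IsStaircase M c) :
    ∀ j ∈ c, 1 ≤ j ∧ j < M := by
  induction hc with
  | nil => simp
  | snoc _ hm _ ih =>
    intro j hj
    rcases List.mem_append.mp hj with hj | hj
    · have := ih j hj; omega
    · have := mem_desc.mp hj; omega

section Algebra

variable {k : Type} [CommRing k] {n d : ℕ}

local notation "T" => Tg k n d

lemma Tg_eq {j : ℕ} (h₁ : 1 ≤ j) (h₂ : j ≤ n) :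
    T j = RingQuot.mkAlgHom k (NCRel k n d) (FreeAlgebra.ι k ⟨j - 1, by omega⟩) :=
  dif_pos ⟨h₁, h₂⟩

lemma Tg_mul_self {j : ℕ} (h₁ : 1 ≤ j) (h₂ : j < n) : T j * T j = 0 := by
  rw [Tg_eq h₁ h₂.le, ← map_mul, ← pow_two,
    RingQuot.mkAlgHom_rel k (NCRel.sq _ (by simp; omega)), map_zero]

lemma Tg_self_pow_eq_zero_of_le {e : ℕ} (hn : 1 ≤ n) (he : d ≤ e) : T n ^ e = 0 := by
  refine pow_eq_zero_of_le he ?_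
  rw [Tg_eq hn le_rfl, ← map_pow,
    RingQuot.mkAlgHom_rel k (NCRel.last _ (by simp; omega)), map_zero]

lemma Tg_braid {i : ℕ} (h₁ : 1 ≤ i) (h₂ : i < n) :
    T i * T (i + 1) * T i = T (i + 1) * T i * T (i + 1) := by
  rw [Tg_eq h₁ h₂.le, Tg_eq (by omega) h₂, ← map_mul, ← map_mul, ← map_mul, ← map_mul,
    RingQuot.mkAlgHom_rel k (NCRel.braid _ _ (by simp; omega))]

/-- Out-of-range indices give `Tg = 1`, so no range hypotheses are needed. -/
lemma Tg_commute_of_add_one_lt {i j : ℕ} (h : i + 1 < j) : Commute (T i) (T j) := by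
  unfold Tg
  split_ifs
  · rw [Commute, SemiconjBy, ← map_mul, ← map_mul,
      RingQuot.mkAlgHom_rel k (NCRel.comm _ _ (by simp; omega))]
  all_goals simp

lemma Tg_commute {i j : ℕ} (h : i + 1 < j ∨ j + 1 < i) : Commute (T i) (T j) :=
  h.elim Tg_commute_of_add_one_lt fun h => (Tg_commute_of_add_one_lt h).symm

@[simp] lemma TwOf_nil : TwOf k n d [] = 1 := rfl

@[simp] lemma TwOf_cons (j : ℕ) (l : List ℕ) : TwOf k n d (j :: l) = T j * TwOf k n d l := by
  simp [TwOf]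

@[simp] lemma TwOf_append (l l' : List ℕ) :
    TwOf k n d (l ++ l') = TwOf k n d l * TwOf k n d l' := by
  simp [TwOf]

lemma TwOf_append_singleton (l : List ℕ) (j : ℕ) :
    TwOf k n d (l ++ [j]) = TwOf k n d l * T j := by
  simp

lemma descT_eq_TwOf (m : ℕ) : descT k n d m = TwOf k n d (desc n m) := rfl

lemma commute_TwOf {j : ℕ} {l : List ℕ} (h : ∀ i ∈ l, i + 1 < j ∨ j + 1 < i) :
    Commute (T j) (TwOf k n d l) :=
  Commute.list_prod_right _ _ <| by simpa using fun i hi => Tg_commute (h i hi).symm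

lemma TwOf_mem_adjoin {c : List ℕ} (hc : ∀ j ∈ c, 1 ≤ j ∧ j < n) :
    TwOf k n d c ∈
      Algebra.adjoin k {x : NCA k n d | ∃ j, 1 ≤ j ∧ j ≤ n - 1 ∧ x = T j} := by
  refine Subalgebra.list_prod_mem _ fun x hx => Algebra.subset_adjoin ?_
  obtain ⟨j, hj, rfl⟩ := List.mem_map.mp hx
  exact ⟨j, (hc j hj).1, Nat.le_sub_one_of_lt (hc j hj).2, rfl⟩

lemma TwOf_desc_mul_Tg_succ {M m i : ℕ} (hi : 1 ≤ i) (hmi : m ≤ i) (hiM : i + 2 ≤ M)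
    (hM : M ≤ n) : TwOf k n d (desc M m) * T (i + 1) = T i * TwOf k n d (desc M m) := by
  have hsplit : desc M m = desc M (i + 2) ++ (i + 1) :: i :: desc i m := by
    rw [← desc_append (by omega) hiM, desc_succ (by omega), desc_succ hmi]
  have hA : Commute (T i) (TwOf k n d (desc M (i + 2))) :=
    commute_TwOf fun l hl => by rw [mem_desc] at hl; omega
  have hB : Commute (T (i + 1)) (TwOf k n d (desc i m)) :=
    commute_TwOf fun l hl => by rw [mem_desc] at hl; omega
  rw [hsplit, TwOf_append, TwOf_cons, TwOf_cons]
  calc TwOf k n d (desc M (i + 2)) * (T (i + 1) * (T i * TwOf k n d (desc i m))) * T (i + 1)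
      = TwOf k n d (desc M (i + 2)) * (T (i + 1) * T i * T (i + 1)) * TwOf k n d (desc i m) := by
        simp only [mul_assoc, hB.eq]
    _ = T i * (TwOf k n d (desc M (i + 2)) * (T (i + 1) * (T i * TwOf k n d (desc i m)))) := by
        rw [← Tg_braid hi (by omega)]
        simp only [← mul_assoc, hA.eq]

variable (k d) in
lemma TwOf_desc_mul_Tg_trichotomy {M m j : ℕ} (hm : 1 ≤ m) (hmM : m ≤ M) (hj : 1 ≤ j)
    (hjM : j < M) (hM : M ≤ n) :
    TwOf k n d (desc M m) * T j = 0 ∨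
      (∃ m', 1 ≤ m' ∧ m' ≤ M ∧ TwOf k n d (desc M m) * T j = TwOf k n d (desc M m')) ∨
      ∃ i, 1 ≤ i ∧ i + 2 ≤ M ∧
        TwOf k n d (desc M m) * T j = T i * TwOf k n d (desc M m) := by
  rcases lt_trichotomy (j + 1) m with hlt | heq | hgt
  · refine .inr <| .inr ⟨j, hj, by omega, (commute_TwOf fun l hl => ?_).eq.symm⟩
    rw [mem_desc] at hl
    omega
  · refine .inr <| .inl ⟨j, hj, hjM.le, ?_⟩
    rw [desc_eq_append_singleton (m := j) hjM, ← heq, TwOf_append_singleton]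
  obtain rfl | hmj := eq_or_lt_of_le (Nat.lt_succ_iff.mp hgt)
  · left
    rw [desc_eq_append_singleton hjM, TwOf_append_singleton, mul_assoc,
      Tg_mul_self hj (by omega), mul_zero]
  · obtain ⟨i, rfl⟩ : ∃ i, j = i + 1 := ⟨j - 1, by omega⟩
    exact .inr <| .inr
      ⟨i, by omega, by omega, TwOf_desc_mul_Tg_succ (by omega) (by omega) hjM hM⟩

variable (k d) in
lemma IsStaircase.mul_Tg {M : ℕ} {c : List ℕ} (hc : IsStaircase M c) (hM : M ≤ n) {j : ℕ}
    (hj : 1 ≤ j) (hjM : j < M) :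
    TwOf k n d c * T j = 0 ∨ ∃ c', IsStaircase M c' ∧ TwOf k n d c * T j = TwOf k n d c' := by
  induction hc generalizing j with
  | nil => omega
  | @snoc M c m hc hm hmM ih =>
    rw [TwOf_append, mul_assoc]
    rcases TwOf_desc_mul_Tg_trichotomy k d hm hmM hj hjM hM with
      h | ⟨m', hm', hm'M, h⟩ | ⟨i, hi, hiM, h⟩
    · exact .inl (by rw [h, mul_zero])
    · exact .inr ⟨_, hc.snoc hm' hm'M, by rw [h, TwOf_append]⟩
    · rw [h, ← mul_assoc]
      rcases ih (by omega) hi (by omega) with h' | ⟨c', hc', h'⟩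
      · exact .inl (by rw [h', zero_mul])
      · exact .inr ⟨_, hc'.snoc hm hmM, by rw [h', TwOf_append]⟩

variable (k d) in
def IsStandardForm (x : NCA k n d) : Prop :=
  ∃ c e m, IsStaircase n c ∧ 1 ≤ e ∧ e ≤ d - 1 ∧ 1 ≤ m ∧ m ≤ n ∧
    x = TwOf k n d c * T n ^ e * descT k n d m

lemma eq_zero_or_isStandardForm {c : List ℕ} (hc : IsStaircase n c) {e m : ℕ} (he : 1 ≤ e)
    (hm : 1 ≤ m) (hmn : m ≤ n) :
    TwOf k n d c * T n ^ e * descT k n d m = 0 ∨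
      IsStandardForm k d (TwOf k n d c * T n ^ e * descT k n d m) := by
  by_cases hed : e ≤ d - 1
  · exact .inr ⟨c, e, m, hc, he, hed, hm, hmn, rfl⟩
  · left
    rw [Tg_self_pow_eq_zero_of_le (by omega) (by omega), mul_zero, zero_mul]

lemma IsStaircase.mul_Tg_self {c : List ℕ} (hc : IsStaircase n c) (hn : 1 ≤ n) :
    TwOf k n d c * T n = 0 ∨ IsStandardForm k d (TwOf k n d c * T n) := by
  simpa [descT_eq_TwOf, desc_of_le] using eq_zero_or_isStandardForm (d := d) hc le_rfl hn le_rfl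

lemma IsStandardForm.mul_Tg_of_lt {x : NCA k n d} (hx : IsStandardForm k d x) {j : ℕ}
    (hj : 1 ≤ j) (hjn : j < n) : x * T j = 0 ∨ IsStandardForm k d (x * T j) := by
  obtain ⟨c, e, m, hc, he, hed, hm, hmn, rfl⟩ := hx
  rw [descT_eq_TwOf, mul_assoc]
  rcases TwOf_desc_mul_Tg_trichotomy k d hm hmn hj hjn le_rfl with
    h | ⟨m', hm', hm'n, h⟩ | ⟨i, hi, hin, h⟩
  · exact .inl (by rw [h, mul_zero])
  · exact .inr ⟨c, e, m', hc, he, hed, hm', hm'n, by rw [h, descT_eq_TwOf]⟩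
  · have hcomm : Commute (T i) (T n ^ e) := (Tg_commute (.inl (by omega))).pow_right e
    rw [h, ← mul_assoc, mul_assoc _ _ (T i), ← hcomm.eq, ← mul_assoc]
    rcases hc.mul_Tg k d le_rfl hi (by omega) with h' | ⟨c', hc', h'⟩
    · exact .inl (by rw [h', zero_mul, zero_mul])
    · exact .inr ⟨c', e, m, hc', he, hed, hm, hmn, by rw [h', descT_eq_TwOf]⟩

lemma IsStandardForm.mul_Tg_self {x : NCA k n d} (hx : IsStandardForm k d x) :
    x * T n = 0 ∨ IsStandardForm k d (x * T n) := by
  obtain ⟨c, e, m, hc, he, hed, hm, hmn, rfl⟩ := hx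
  obtain rfl | hmn := eq_or_lt_of_le hmn
  · have h := eq_zero_or_isStandardForm (k := k) (d := d) hc (e := e + 1) (by omega) hm le_rfl
    simp only [descT_eq_TwOf, desc_of_le le_rfl, TwOf_nil, mul_one] at h ⊢
    rwa [pow_succ, ← mul_assoc] at h
  obtain ⟨p, hp⟩ : ∃ p, p + 1 = n := ⟨n - 1, by omega⟩
  have hbraid : T p * T n * T p = T n * T p * T n := by
    simpa only [hp] using Tg_braid (k := k) (d := d) (i := p) (by omega) (by omega)
  have hdesc : TwOf k n d (desc n m) = T p * TwOf k n d (desc p m) := by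
    rw [← hp, desc_succ (by omega), TwOf_cons]
  have hcomm : Commute (T n) (TwOf k n d (desc p m)) :=
    commute_TwOf fun l hl => by rw [mem_desc] at hl; omega
  have hsplit : TwOf k n d c * T n ^ e * descT k n d m * T n =
      TwOf k n d c * (T n ^ e * T p * T n) * TwOf k n d (desc p m) := by
    rw [descT_eq_TwOf, hdesc]
    simp only [mul_assoc, ← hcomm.eq]
  rw [hsplit]
  obtain rfl | he := eq_or_lt_of_le he
  · rw [pow_one, ← hbraid]
    rcases hc.mul_Tg k d le_rfl (j := p) (by omega) (by omega) with h | ⟨c', hc', h⟩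
    · exact .inl (by simp only [← mul_assoc, h, zero_mul])
    · refine .inr ⟨c', 1, m, hc', le_rfl, hed, hm, hmn.le, ?_⟩
      rw [← h, descT_eq_TwOf, hdesc]
      simp only [pow_one, mul_assoc]
  · obtain ⟨e, rfl⟩ : ∃ e', e = e' + 2 := ⟨e - 2, by omega⟩
    left
    rw [pow_add, mul_assoc _ (T n ^ 2), mul_assoc _ (T n ^ 2 * T p),
      sq_mul_mul_eq_zero_of_braid hbraid.symm (Tg_mul_self (by omega) (by omega))]
    simp

lemma IsStandardForm.mul_Tg {x : NCA k n d} (hx : IsStandardForm k d x) {j : ℕ} (hj : 1 ≤ j)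
    (hjn : j ≤ n) : x * T j = 0 ∨ IsStandardForm k d (x * T j) := by
  obtain hjn | rfl := lt_or_eq_of_le hjn
  · exact hx.mul_Tg_of_lt hj hjn
  · exact hx.mul_Tg_self

variable (k d) in
theorem TwOf_eq_zero_or_staircase_or_isStandardForm {l : List ℕ}
    (hl : ∀ j ∈ l, 1 ≤ j ∧ j ≤ n) :
    TwOf k n d l = 0 ∨ (∃ c, IsStaircase n c ∧ TwOf k n d l = TwOf k n d c) ∨
      IsStandardForm k d (TwOf k n d l) := by
  induction l using List.reverseRecOn with
  | nil => exact .inr <| .inl ⟨[], isStaircase_nil n, rfl⟩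
  | append_singleton l j ih =>
    obtain ⟨hj, hjn⟩ := hl j (by simp)
    rw [TwOf_append_singleton]
    rcases ih fun i hi => hl i (by simp [hi]) with h | ⟨c, hc, h⟩ | h
    · exact .inl (by rw [h, zero_mul])
    · rw [h]
      obtain hjn | rfl := lt_or_eq_of_le hjn
      · rcases hc.mul_Tg k d le_rfl hj hjn with h' | ⟨c', hc', h'⟩
        · exact .inl h'
        · exact .inr <| .inl ⟨c', hc', h'⟩
      · exact (hc.mul_Tg_self hj).imp_right .inr
    · exact (h.mul_Tg hj hjn).imp_right (.inr ·)

end Algebra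

section Inversions

variable {n : ℕ}

def numInv (w : Perm (Fin n)) : ℕ := #{p : Fin n × Fin n | p.1 < p.2 ∧ w p.2 < w p.1}

lemma numInv_one : numInv (1 : Perm (Fin n)) = 0 := by
  rw [numInv, card_eq_zero, filter_eq_empty_iff]
  exact fun _ _ h => lt_asymm h.1 h.2

lemma swap_lt_swap_iff {a b x y : Fin n} (hab : (a : ℕ) + 1 = b) (hfwd : ¬(x = a ∧ y = b))
    (hrev : ¬(x = b ∧ y = a)) : swap a b x < swap a b y ↔ x < y := by
  simp only [Fin.ext_iff] at hfwd hrev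
  simp only [swap_apply_def, Fin.lt_def]
  split_ifs <;> simp only [Fin.ext_iff] at * <;> omega

lemma numInv_mul_swap_of_lt (w : Perm (Fin n)) {a b : Fin n} (hab : (a : ℕ) + 1 = b)
    (h : w a < w b) : numInv (w * swap a b) = numInv w + 1 := by
  have hnotMem : (b, a) ∉ ({p : Fin n × Fin n | p.1 < p.2 ∧ w p.2 < w p.1} : Finset _) := by
    simp only [mem_filter, Fin.lt_def]
    omega
  -- `swap a b × swap a b` carries the inversions of `w`, together with `(b, a)`, onto those
  -- of `w * swap a b`.
  rw [numInv, numInv, ← card_insert_of_notMem hnotMem, eq_comm]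
  refine card_equiv ((swap a b).prodCongr (swap a b)) fun ⟨x, y⟩ => ?_
  rw [mem_insert, mem_filter, mem_filter]
  simp only [mem_univ, true_and, prodCongr_apply, Prod.map, Perm.mul_apply, swap_apply_self,
    Prod.mk.injEq]
  by_cases hrev : x = b ∧ y = a
  · obtain ⟨rfl, rfl⟩ := hrev
    simp only [swap_apply_left, swap_apply_right, true_or, true_iff, h, and_true]
    rw [Fin.lt_def]
    omega
  by_cases hfwd : x = a ∧ y = b
  · obtain ⟨rfl, rfl⟩ := hfwd
    simp only [swap_apply_left, swap_apply_right, Fin.lt_def, Fin.ext_iff]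
    omega
  rw [swap_lt_swap_iff hab hfwd hrev]
  simp [hrev]

lemma numInv_mul_swap_le (w : Perm (Fin n)) {a b : Fin n} (hab : (a : ℕ) + 1 = b) :
    numInv (w * swap a b) ≤ numInv w + 1 := by
  rcases lt_or_gt_of_ne (w.injective.ne (Fin.ne_of_val_ne (by omega) : a ≠ b)) with h | h
  · exact (numInv_mul_swap_of_lt w hab h).le
  · have h' := numInv_mul_swap_of_lt (w * swap a b) hab (by simpa using h)
    rw [mul_assoc, swap_mul_self, mul_one] at h'
    omega

lemma sp_succ {q : ℕ} (hq : q + 1 < n) : sp n (q + 1) = swap ⟨q, by omega⟩ ⟨q + 1, hq⟩ :=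
  dif_pos ⟨by omega, hq⟩

lemma sp_apply_of_lt {j : ℕ} {x : Fin n} (hx : j < x) : sp n j x = x := by
  unfold sp
  split_ifs
  · exact swap_apply_of_ne_of_ne (Fin.ne_of_val_ne (by simp; omega))
      (Fin.ne_of_val_ne (by simp; omega))
  · rfl

lemma numInv_mul_sp_le (w : Perm (Fin n)) (j : ℕ) : numInv (w * sp n j) ≤ numInv w + 1 := by
  unfold sp
  split_ifs with h
  · exact numInv_mul_swap_le w (by simp; omega)
  · rw [mul_one]
    exact Nat.le_succ _

lemma numInv_prod_sp_le_length (l : List ℕ) : numInv (l.map (sp n)).prod ≤ l.length := by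
  induction l using List.reverseRecOn with
  | nil => simp [numInv_one]
  | append_singleton l j ih =>
    simp only [List.map_append, List.map_singleton, List.prod_append, List.prod_singleton,
      List.length_append, List.length_singleton]
    exact (numInv_mul_sp_le _ j).trans (by omega)

lemma prod_sp_apply_of_forall_lt {l : List ℕ} {x : Fin n} (hl : ∀ j ∈ l, j < x) :
    (l.map (sp n)).prod x = x := by
  induction l with
  | nil => rfl
  | cons j l ih =>
    rw [List.map_cons, List.prod_cons, Perm.mul_apply,
      ih fun i hi => hl i (List.mem_cons_of_mem j hi), sp_apply_of_lt (hl j List.mem_cons_self)]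

lemma numInv_mul_prod_desc {m : ℕ} (hm : 1 ≤ m) :
    ∀ (p : ℕ) (hp : p < n) (u : Perm (Fin n)),
      (∀ x < (⟨p, hp⟩ : Fin n), u x < u ⟨p, hp⟩) →
      numInv (u * ((desc (p + 1) m).map (sp n)).prod) = numInv u + (p + 1 - m)
  | 0, _, u, _ => by simp [desc_of_le hm, Nat.sub_eq_zero_of_le hm]
  | q + 1, hp, u, hu => by
    obtain hqm | hmq := lt_or_ge (q + 1) m
    · simp [desc_of_le hqm, show q + 1 + 1 - m = 0 by omega]
    set a : Fin n := ⟨q, by omega⟩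
    set b : Fin n := ⟨q + 1, hp⟩
    have hab : a < b := Fin.lt_def.mpr (Nat.lt_succ_self q)
    have hu' : ∀ x < a, (u * swap a b) x < (u * swap a b) a := by
      intro x hx
      rw [Perm.mul_apply, Perm.mul_apply, swap_apply_left,
        swap_apply_of_ne_of_ne hx.ne (hx.trans hab).ne]
      exact hu x (hx.trans hab)
    rw [desc_succ hmq, List.map_cons, List.prod_cons, sp_succ hp, ← mul_assoc,
      numInv_mul_prod_desc hm q (by omega) _ hu', numInv_mul_swap_of_lt u rfl (hu a hab)]
    omega

lemma IsStaircase.numInv_prod {M : ℕ} {c : List ℕ} (hc : IsStaircase M c) (hM : M ≤ n) :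
    numInv (c.map (sp n)).prod = c.length := by
  induction hc with
  | nil => exact numInv_one
  | @snoc M c m hc hm _ ih =>
    set u := (c.map (sp n)).prod
    have hfix : ∀ x : Fin n, M ≤ x → u x = x := fun x hx =>
      prod_sp_apply_of_forall_lt fun j hj => (hc.mem j hj).2.trans_le hx
    have hu : ∀ x < (⟨M, by omega⟩ : Fin n), u x < u ⟨M, by omega⟩ := by
      intro x hx
      rw [hfix ⟨M, by omega⟩ le_rfl, Fin.lt_def]
      by_contra hux
      have hux' : u x = x := u.injective (hfix _ (not_lt.mp hux))
      rw [hux'] at hux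
      exact hux hx
    rw [List.map_append, List.prod_append, numInv_mul_prod_desc hm M (by omega) u hu,
      ih (by omega), List.length_append, length_desc]

lemma IsStaircase.isRedWord {c : List ℕ} (hc : IsStaircase n c) :
    IsRedWord n (c.map (sp n)).prod c :=
  ⟨hc.mem, rfl, fun l' _ hl' => by
    rw [← hc.numInv_prod le_rfl, ← hl']
    exact numInv_prod_sp_le_length l'⟩

end Inversions

end NCA

theorem NCA_standard_form_general (k : Type) [CommRing k] (n d : ℕ)
    (l : List ℕ) (hl : ∀ j ∈ l, 1 ≤ j ∧ j ≤ n) (hne : TwOf k n d l ≠ 0) :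
    TwOf k n d l ∈ Algebra.adjoin k {x : NCA k n d | ∃ j, 1 ≤ j ∧ j ≤ n - 1 ∧ x = Tg k n d j}
    ∨ ∃ (w : Equiv.Perm (Fin n)) (lw : List ℕ) (k0 m : ℕ),
        IsRedWord n w lw ∧ 1 ≤ k0 ∧ k0 ≤ d - 1 ∧ 1 ≤ m ∧ m ≤ n ∧
        TwOf k n d l = TwOf k n d lw * Tg k n d n ^ k0 * descT k n d m := by
  rcases NCA.TwOf_eq_zero_or_staircase_or_isStandardForm k d hl with
    h | ⟨c, hc, h⟩ | ⟨c, e, m, hc, he, hed, hm, hmn, h⟩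
  · exact absurd h hne
  · exact .inl (h ▸ NCA.TwOf_mem_adjoin hc.mem)
  · exact .inr ⟨_, c, e, m, hc.isRedWord, he, hed, hm, hmn, h⟩

/-- Every nonzero product of generators in `NC_A(n,d)` either lies in the subalgebra
generated by `T_1, …, T_{n-1}`, or equals an element in standard form
`T_w T_n^k T_{n-1} ⋯ T_m` with `w ∈ S_n`, `1 ≤ k ≤ d-1`, `1 ≤ m ≤ n`. -/
theorem NCA_standard_form (k : Type) [CommRing k] (n d : ℕ) (hn : 1 ≤ n) (hd : 2 ≤ d)
    (l : List ℕ) (hl : ∀ j ∈ l, 1 ≤ j ∧ j ≤ n) (hne : TwOf k n d l ≠ 0) :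
    TwOf k n d l ∈ Algebra.adjoin k {x : NCA k n d | ∃ j, 1 ≤ j ∧ j ≤ n - 1 ∧ x = Tg k n d j}
    ∨ ∃ (w : Equiv.Perm (Fin n)) (lw : List ℕ) (k0 m : ℕ),
        IsRedWord n w lw ∧ 1 ≤ k0 ∧ k0 ≤ d - 1 ∧ 1 ≤ m ∧ m ≤ n ∧
        TwOf k n d l = TwOf k n d lw * Tg k n d n ^ k0 * descT k n d m :=
  NCA_standard_form_general k n d l hl hne
end

section
/- The subalgebra of NC_A(n,d) generated by T_1,...,T_l (for any 1 ≤ l ≤ n-1) is isomorphic as a k-algebra to the usual nil-Coxeter algebra of type A_l, i.e., the algebra with generators U_1,...,U_l, type-A braid relations, and U_i^2 = 0 for all i. -/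
section Aux

variable (k : Type) [CommRing k] (n d l : ℕ)

/-- Every generator of `NCA k l 2` squares to zero. -/
lemma NCA_gen_sq (i : Fin l) :
    RingQuot.mkAlgHom k (NCRel k l 2) (FreeAlgebra.ι k i) ^ 2 = 0 := by
  rcases eq_or_lt_of_le (Nat.succ_le_of_lt i.isLt) with h | h
  · have := RingQuot.mkAlgHom_rel k (s := NCRel k l 2) (NCRel.last i h)
    simpa using this
  · have := RingQuot.mkAlgHom_rel k (s := NCRel k l 2) (NCRel.sq i h)
    simpa using this

/-- The inclusion `NCA k l 2 → NCA k n d`. -/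
noncomputable def NCphi (hln : l + 1 ≤ n) : NCA k l 2 →ₐ[k] NCA k n d :=
  RingQuot.liftAlgHom k ⟨FreeAlgebra.lift k fun i : Fin l =>
      RingQuot.mkAlgHom k (NCRel k n d) (FreeAlgebra.ι k (Fin.castLE (by omega) i)), by
    intro x y h
    induction h with
    | braid i j hij =>
        simpa only [map_mul, FreeAlgebra.lift_ι_apply] using
          RingQuot.mkAlgHom_rel k (s := NCRel k n d) (NCRel.braid _ _ (by simpa using hij))
    | comm i j hij =>
        simpa only [map_mul, FreeAlgebra.lift_ι_apply] using
          RingQuot.mkAlgHom_rel k (s := NCRel k n d) (NCRel.comm _ _ (by simpa using hij))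
    | sq i hi =>
        simpa only [map_pow, map_zero, FreeAlgebra.lift_ι_apply] using
          RingQuot.mkAlgHom_rel k (s := NCRel k n d)
            (NCRel.sq (Fin.castLE (show l ≤ n by omega) i) (by simp [Fin.castLE]; omega))
    | last i hi =>
        simpa only [map_pow, map_zero, FreeAlgebra.lift_ι_apply] using
          RingQuot.mkAlgHom_rel k (s := NCRel k n d)
            (NCRel.sq (Fin.castLE (show l ≤ n by omega) i) (by simp [Fin.castLE]; omega))⟩

lemma NCphi_gen (hln : l + 1 ≤ n) (i : Fin l) :
    NCphi k n d l hln (RingQuot.mkAlgHom k (NCRel k l 2) (FreeAlgebra.ι k i)) =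
      RingQuot.mkAlgHom k (NCRel k n d) (FreeAlgebra.ι k (Fin.castLE (by omega) i)) := by
  simp [NCphi, RingQuot.liftAlgHom_mkAlgHom_apply]

/-- The retraction `NCA k n d → NCA k l 2`, killing generators with index `≥ l`. -/
noncomputable def NCpsi (hln : l + 1 ≤ n) (hd : 2 ≤ d) : NCA k n d →ₐ[k] NCA k l 2 :=
  RingQuot.liftAlgHom k ⟨FreeAlgebra.lift k fun i : Fin n =>
      if h : (i : ℕ) < l then RingQuot.mkAlgHom k (NCRel k l 2) (FreeAlgebra.ι k ⟨i, h⟩)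
      else 0, by
    intro x y h
    induction h with
    | braid i j hij =>
        simp only [map_mul, FreeAlgebra.lift_ι_apply]
        by_cases hj : (j : ℕ) < l
        · have hi : (i : ℕ) < l := by omega
          rw [dif_pos hi, dif_pos hj]
          simpa only [map_mul] using
            RingQuot.mkAlgHom_rel k (s := NCRel k l 2)
              (NCRel.braid (⟨i, hi⟩ : Fin l) ⟨j, hj⟩ (by simpa using hij))
        · rw [dif_neg hj]
          simp
    | comm i j hij =>
        simp only [map_mul, FreeAlgebra.lift_ι_apply]
        by_cases hj : (j : ℕ) < l
        · have hi : (i : ℕ) < l := by omega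
          rw [dif_pos hi, dif_pos hj]
          simpa only [map_mul] using
            RingQuot.mkAlgHom_rel k (s := NCRel k l 2)
              (NCRel.comm (⟨i, hi⟩ : Fin l) ⟨j, hj⟩ (by simpa using hij))
        · rw [dif_neg hj]
          simp
    | sq i hi =>
        simp only [map_pow, FreeAlgebra.lift_ι_apply, map_zero]
        by_cases h' : (i : ℕ) < l
        · rw [dif_pos h']
          exact NCA_gen_sq k l _
        · rw [dif_neg h']
          exact zero_pow (by norm_num)
    | last i hi =>
        simp only [map_pow, FreeAlgebra.lift_ι_apply, map_zero]
        have h' : ¬ (i : ℕ) < l := by omega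
        rw [dif_neg h']
        exact zero_pow (by omega)⟩

lemma NCpsi_comp_NCphi (hln : l + 1 ≤ n) (hd : 2 ≤ d) :
    (NCpsi k n d l hln hd).comp (NCphi k n d l hln) = AlgHom.id k (NCA k l 2) := by
  apply RingQuot.ringQuot_ext'
  apply FreeAlgebra.hom_ext
  funext i
  simp only [Function.comp_apply, AlgHom.coe_comp, AlgHom.coe_id, id_eq]
  rw [NCphi_gen]
  simp only [NCpsi, RingQuot.liftAlgHom_mkAlgHom_apply, FreeAlgebra.lift_ι_apply]
  rw [dif_pos (by simpa using i.isLt)]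
  congr 1

lemma NCphi_injective (hln : l + 1 ≤ n) (hd : 2 ≤ d) :
    Function.Injective (NCphi k n d l hln) := by
  have h := NCpsi_comp_NCphi k n d l hln hd
  intro x y hxy
  have := congrArg (NCpsi k n d l hln hd) hxy
  simpa [← AlgHom.comp_apply, h] using this

lemma NCphi_range (hln : l + 1 ≤ n) :
    (NCphi k n d l hln).range =
      Algebra.adjoin k {x : NCA k n d | ∃ j, 1 ≤ j ∧ j ≤ l ∧ x = Tg k n d j} := by
  have htop : Algebra.adjoin k
      (Set.range fun i : Fin l => RingQuot.mkAlgHom k (NCRel k l 2) (FreeAlgebra.ι k i)) = ⊤ := by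
    have h1 : (Set.range fun i : Fin l =>
        RingQuot.mkAlgHom k (NCRel k l 2) (FreeAlgebra.ι k i)) =
        ⇑(RingQuot.mkAlgHom k (NCRel k l 2)) '' Set.range (FreeAlgebra.ι k) := by
      rw [← Set.range_comp]; rfl
    rw [h1, ← AlgHom.map_adjoin, FreeAlgebra.adjoin_range_ι, Algebra.map_top,
      AlgHom.range_eq_top]
    exact RingQuot.mkAlgHom_surjective k _
  calc (NCphi k n d l hln).range
      = (⊤ : Subalgebra k (NCA k l 2)).map (NCphi k n d l hln) := (Algebra.map_top _).symm
    _ = (Algebra.adjoin k _).map (NCphi k n d l hln) := by rw [htop]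
    _ = Algebra.adjoin k ((NCphi k n d l hln) ''
          Set.range fun i : Fin l => RingQuot.mkAlgHom k (NCRel k l 2) (FreeAlgebra.ι k i)) :=
        AlgHom.map_adjoin _ _
    _ = Algebra.adjoin k {x : NCA k n d | ∃ j, 1 ≤ j ∧ j ≤ l ∧ x = Tg k n d j} := by
        congr 1
        ext x
        constructor
        · rintro ⟨-, ⟨i, rfl⟩, rfl⟩
          refine ⟨(i : ℕ) + 1, by omega, by omega, ?_⟩
          rw [NCphi_gen, Tg, dif_pos ⟨by omega, by omega⟩]
          congr 1
        · rintro ⟨j, hj1, hjl, rfl⟩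
          refine ⟨RingQuot.mkAlgHom k (NCRel k l 2) (FreeAlgebra.ι k ⟨j - 1, by omega⟩),
            ⟨⟨j - 1, by omega⟩, rfl⟩, ?_⟩
          rw [NCphi_gen, Tg, dif_pos ⟨hj1, by omega⟩]
          congr 1

end Aux

/-- For `1 ≤ l ≤ n-1`, the subalgebra of `NC_A(n,d)` generated by `T_1, …, T_l` is
isomorphic as a `k`-algebra to the usual nil-Coxeter algebra of type `A_l`
(i.e. `NC_A(l,2)`, with all squares of generators zero). -/
theorem NCA_subalgebra_iso (k : Type) [CommRing k] (n d l : ℕ)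
    (hn : 1 ≤ n) (hd : 2 ≤ d) (hl : 1 ≤ l) (hln : l ≤ n - 1) :
    Nonempty
      ((Algebra.adjoin k {x : NCA k n d | ∃ j, 1 ≤ j ∧ j ≤ l ∧ x = Tg k n d j})
        ≃ₐ[k] NCA k l 2) := by
  have hln' : l + 1 ≤ n := by omega
  exact ⟨((Subalgebra.equivOfEq _ _ (NCphi_range k n d l hln').symm).trans
    (AlgEquiv.ofInjective (NCphi k n d l hln') (NCphi_injective k n d l hln' hd)).symm)⟩
end

section
/- Let k be a field of characteristic zero and M a generalized Coxeter matrix. Then the generalized nil-Coxeter algebra NC(M) admits no bialgebra structure: there is no algebra homomorphism Δ : NC(M) → NC(M) ⊗ NC(M) and counit ε satisfying the counit axioms. -/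
/-- The alternating word `x y x y ⋯` of length `len` on two elements of a monoid. -/
def altProd {A : Type} [Monoid A] (x y : A) (len : ℕ) : A :=
  ((List.range len).map fun t => if t % 2 = 0 then x else y).prod

/-- Relations of the generalized nil-Coxeter algebra `NC(M)` of a generalized Coxeter
matrix `M : I → I → ℕ` (`M i j = 0` encodes `m_{ij} = ∞`): the braid relations
`T_i T_j T_i ⋯ = T_j T_i T_j ⋯` (`M i j` factors on each side, for `i ≠ j` with
`M i j ≠ 0`) and the order relations `T_i^{M i i} = 0`. -/
inductive GCRel (k : Type) [CommRing k] {I : Type} (M : I → I → ℕ) :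
    FreeAlgebra k I → FreeAlgebra k I → Prop
  | braid (i j : I) (h : i ≠ j) (hm : M i j ≠ 0) :
      GCRel k M (altProd (FreeAlgebra.ι k i) (FreeAlgebra.ι k j) (M i j))
        (altProd (FreeAlgebra.ι k j) (FreeAlgebra.ι k i) (M i j))
  | order (i : I) : GCRel k M (FreeAlgebra.ι k i ^ M i i) 0

/-- The generalized nil-Coxeter algebra `NC(M)`. -/
abbrev NCM (k : Type) [CommRing k] {I : Type} (M : I → I → ℕ) := RingQuot (GCRel k M)

/-- The generator `T_i` of `NC(M)`. -/
noncomputable def TgM (k : Type) [CommRing k] {I : Type} (M : I → I → ℕ) (i : I) :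
    NCM k M :=
  RingQuot.mkAlgHom k (GCRel k M) (FreeAlgebra.ι k i)

/-! Let `T = T_i` and `m = M i i = n + 1`. The counit kills every generator, since they are
nilpotent. Send `NC(M) ⊗ NC(M)` to the commutative algebra `C = (k[X]/(X^m))[y]/(y²)` by
`T ↦ x = X` on the left factor, `T ↦ y` on the right one and all other generators to `0`. Modulo
`x` the left map becomes `ε`, and modulo `y` the right one does, so the counit axioms give
`z ≡ y (mod x)` and `z ≡ x (mod y)` for the image `z` of `Δ T`. Hence `z^m = m x^n y ≠ 0`, while
`z^m` is the image of `Δ (T^m) = 0`. -/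

section NilpotentAlgebra

variable {R : Type*} [CommRing R]

theorem add_pow_succ_of_sq_eq_zero {e : R} (he : e ^ 2 = 0) (x : R) (n : ℕ) :
    (x + e) ^ (n + 1) = x ^ (n + 1) + (n + 1 : ℕ) * x ^ n * e := by
  induction n with
  | zero => simp
  | succ n ih =>
    rw [pow_succ, ih]
    push_cast
    linear_combination (n + 1 : R) * x ^ n * he

/-- Writing `z = x + y s`, only the term `(n + 1) x^n (y s)` of `z^(n+1)` survives, and
`y s = z - x ≡ y (mod x)`. -/
theorem pow_succ_eq_of_dvd_sub {x y z : R} {n : ℕ} (hx : x ^ (n + 1) = 0) (hy : y ^ 2 = 0)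
    (hzy : x ∣ z - y) (hzx : y ∣ z - x) : z ^ (n + 1) = (n + 1 : ℕ) * x ^ n * y := by
  obtain ⟨q, hq⟩ := hzy
  obtain ⟨s, hs⟩ := hzx
  have hys : (y * s) ^ 2 = 0 := by rw [mul_pow, hy, zero_mul]
  rw [eq_add_of_sub_eq' hs, add_pow_succ_of_sq_eq_zero hys, hx, zero_add, ← hs]
  linear_combination ((n + 1 : ℕ) : R) * x ^ n * hq + ((n + 1 : ℕ) : R) * (q - 1) * hx

end NilpotentAlgebra

open Polynomial in
theorem exists_pow_mul_ne_zero (k : Type) [Field k] [CharZero k] (n : ℕ) :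
    ∃ (C : Type) (_ : CommRing C) (_ : Algebra k C) (x y : C),
      x ^ (n + 1) = 0 ∧ y ^ 2 = 0 ∧ ((n + 1 : ℕ) : C) * x ^ n * y ≠ 0 := by
  let A := k[X] ⧸ Ideal.span {(X : k[X]) ^ (n + 1)}
  let a : A := Ideal.Quotient.mk _ X
  have ha : ∀ m, a ^ m = 0 ↔ n + 1 ≤ m := fun m => by
    rw [← map_pow, Ideal.Quotient.eq_zero_iff_mem, Ideal.mem_span_singleton,
      pow_dvd_pow_iff X_ne_zero not_isUnit_X]
  refine ⟨DualNumber A, inferInstance, inferInstance, TrivSqZeroExt.inl a, DualNumber.eps,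
    ?_, ?_, ?_⟩
  · rw [TrivSqZeroExt.inl_pow, (ha _).2 le_rfl, TrivSqZeroExt.inl_zero]
  · rw [sq, DualNumber.eps_mul_eps]
  · intro h
    have h' : ((n + 1 : ℕ) : k) • a ^ n = 0 := by
      rw [Nat.cast_smul_eq_nsmul, nsmul_eq_mul]
      simpa using congrArg TrivSqZeroExt.snd h
    rcases smul_eq_zero.1 h' with h' | h'
    · exact Nat.cast_ne_zero.2 n.succ_ne_zero h'
    · exact n.not_succ_le_self ((ha n).1 h')

theorem map_altProd {A B F : Type} [Monoid A] [Monoid B] [FunLike F A B]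
    [MonoidHomClass F A B] (f : F) (u v : A) (n : ℕ) :
    f (altProd u v n) = altProd (f u) (f v) n := by
  simp only [altProd, map_list_prod, List.map_map]
  congr 1
  exact List.map_congr_left fun t _ => by simp [apply_ite f]

theorem altProd_eq_zero {A : Type} [MonoidWithZero A] {u v : A} {n : ℕ} (hn : 2 ≤ n)
    (h : u = 0 ∨ v = 0) : altProd u v n = 0 := by
  apply List.prod_eq_zero
  rcases h with h | h
  · exact List.mem_map.2 ⟨0, List.mem_range.2 (by omega), by simp [h]⟩
  · exact List.mem_map.2 ⟨1, List.mem_range.2 (by omega), by simp [h]⟩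

namespace NCM

variable (k : Type) [CommRing k] {I : Type} (M : I → I → ℕ)

theorem algHom_ext {B : Type} [Semiring B] [Algebra k B] {f g : NCM k M →ₐ[k] B}
    (h : ∀ i, f (TgM k M i) = g (TgM k M i)) : f = g :=
  RingQuot.ringQuot_ext' _ _ _ (FreeAlgebra.hom_ext (funext h))

theorem TgM_pow_eq_zero (i : I) : TgM k M i ^ M i i = 0 := by
  rw [TgM, ← map_pow, RingQuot.mkAlgHom_rel k (GCRel.order i), map_zero]

theorem algHom_TgM_eq_zero {R : Type} [CommRing R] [IsReduced R] [Algebra k R]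
    (φ : NCM k M →ₐ[k] R) (i : I) : φ (TgM k M i) = 0 :=
  IsNilpotent.eq_zero ⟨M i i, by rw [← map_pow, TgM_pow_eq_zero, map_zero]⟩

/-- The braid relations hold because `M j l ≥ 2` makes both alternating words contain
a generator sent to `0`. -/
theorem exists_algHom_TgM_eq_ite [DecidableEq I] (hdiag : ∀ j, M j j ≠ 0)
    (hoff : ∀ j l, j ≠ l → M j l = 0 ∨ 2 ≤ M j l) (i : I) {C : Type} [Semiring C]
    [Algebra k C] {x : C} (hx : x ^ M i i = 0) :
    ∃ π : NCM k M →ₐ[k] C, ∀ j, π (TgM k M j) = if j = i then x else 0 := by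
  let f : I → C := fun j => if j = i then x else 0
  refine ⟨RingQuot.liftAlgHom k ⟨FreeAlgebra.lift k f, ?_⟩, fun j => ?_⟩
  · rintro _ _ (⟨j, l, hjl, hm⟩ | j)
    · have hz : f j = 0 ∨ f l = 0 := by
        by_cases hj : j = i
        · exact .inr (if_neg fun hl => hjl (hj.trans hl.symm))
        · exact .inl (if_neg hj)
      have h2 := (hoff j l hjl).resolve_left hm
      rw [map_altProd, map_altProd, FreeAlgebra.lift_ι_apply, FreeAlgebra.lift_ι_apply,
        altProd_eq_zero h2 hz, altProd_eq_zero h2 hz.symm]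
    · rw [map_pow, map_zero, FreeAlgebra.lift_ι_apply]
      by_cases hj : j = i
      · subst hj; simpa [f] using hx
      · simp [f, hj, zero_pow (hdiag j)]
  · exact (RingQuot.liftAlgHom_mkAlgHom_apply ..).trans (FreeAlgebra.lift_ι_apply ..)

theorem dvd_sub_algebraMap_counit {C : Type} [CommRing C] [Algebra k C]
    (π : NCM k M →ₐ[k] C) (ε : NCM k M →ₐ[k] k) {x : C} (hπ : ∀ j, x ∣ π (TgM k M j))
    (hε : ∀ j, ε (TgM k M j) = 0) (a : NCM k M) : x ∣ π a - algebraMap k C (ε a) := by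
  have h : (Ideal.Quotient.mkₐ k (Ideal.span {x})).comp π = (Algebra.ofId k _).comp ε :=
    algHom_ext k M fun j => by
      simpa [hε, Ideal.Quotient.eq_zero_iff_mem, Ideal.mem_span_singleton] using hπ j
  rw [← Ideal.mem_span_singleton, ← Ideal.Quotient.eq]
  exact AlgHom.congr_fun h a

end NCM

section TensorCounit

open TensorProduct

variable {k A C : Type*} [CommRing k] [Ring A] [Algebra k A] [CommRing C] [Algebra k C]

theorem dvd_lift_sub_lid_map (f g : A →ₐ[k] C) (ε : A →ₗ[k] k) {x : C}
    (hf : ∀ a, x ∣ f a - algebraMap k C (ε a)) (t : A ⊗[k] A) :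
    x ∣ Algebra.TensorProduct.lift f g (fun _ _ => .all _ _) t -
      g (TensorProduct.lid k A (TensorProduct.map ε LinearMap.id t)) := by
  induction t using TensorProduct.induction_on with
  | zero => simp
  | tmul u v =>
    rw [Algebra.TensorProduct.lift_tmul, map_tmul, lid_tmul, LinearMap.id_apply, map_smul,
      Algebra.smul_def, ← sub_mul]
    exact (hf u).mul_right _
  | add t t' ht ht' =>
    rw [map_add, map_add, map_add, map_add, add_sub_add_comm]
    exact dvd_add ht ht'

theorem dvd_lift_sub_rid_map (f g : A →ₐ[k] C) (ε : A →ₗ[k] k) {x : C}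
    (hg : ∀ a, x ∣ g a - algebraMap k C (ε a)) (t : A ⊗[k] A) :
    x ∣ Algebra.TensorProduct.lift f g (fun _ _ => .all _ _) t -
      f (TensorProduct.rid k A (TensorProduct.map LinearMap.id ε t)) := by
  induction t using TensorProduct.induction_on with
  | zero => simp
  | tmul u v =>
    rw [Algebra.TensorProduct.lift_tmul, map_tmul, rid_tmul, LinearMap.id_apply, map_smul,
      Algebra.smul_def, mul_comm (algebraMap k C _), ← mul_sub]
    exact (hg v).mul_left _
  | add t t' ht ht' =>
    rw [map_add, map_add, map_add, map_add, add_sub_add_comm]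
    exact dvd_add ht ht'

end TensorCounit

open TensorProduct in
theorem NCM_no_bialgebra_general (k : Type) [Field k] [CharZero k]
    (I : Type) [Nonempty I] (M : I → I → ℕ)
    (hdiag : ∀ i, 2 ≤ M i i)
    (hoff : ∀ i j, i ≠ j → M i j = 0 ∨ 2 ≤ M i j) :
    ¬ ∃ (Δ : NCM k M →ₐ[k] NCM k M ⊗[k] NCM k M) (ε : NCM k M →ₐ[k] k),
        (∀ x : NCM k M,
          TensorProduct.lid k (NCM k M)
            (TensorProduct.map ε.toLinearMap LinearMap.id (Δ x)) = x) ∧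
        (∀ x : NCM k M,
          TensorProduct.rid k (NCM k M)
            (TensorProduct.map LinearMap.id ε.toLinearMap (Δ x)) = x) := by
  classical
  rintro ⟨Δ, ε, hL, hR⟩
  obtain ⟨i⟩ := ‹Nonempty I›
  obtain ⟨n, hn⟩ : ∃ n, M i i = n + 1 := ⟨M i i - 1, by have := hdiag i; omega⟩
  obtain ⟨C, _, _, x, y, hx, hy, hxy⟩ := exists_pow_mul_ne_zero k n
  have hdiag' j : M j j ≠ 0 := by have := hdiag j; omega
  obtain ⟨π₁, hπ₁⟩ := NCM.exists_algHom_TgM_eq_ite k M hdiag' hoff i (hn ▸ hx)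
  obtain ⟨π₂, hπ₂⟩ := NCM.exists_algHom_TgM_eq_ite k M hdiag' hoff i
    (pow_eq_zero_of_le (hdiag i) hy)
  have hε := NCM.algHom_TgM_eq_zero k M ε
  have hdvd {z : C} (π : NCM k M →ₐ[k] C) (hπ : ∀ j, π (TgM k M j) = if j = i then z else 0)
      (a : NCM k M) : z ∣ π a - algebraMap k C (ε a) :=
    NCM.dvd_sub_algebraMap_counit k M π ε (fun j => by rw [hπ]; split_ifs <;> simp) hε a
  set T := TgM k M i
  set ρ := Algebra.TensorProduct.lift π₁ π₂ fun _ _ => .all _ _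
  have hzy : x ∣ ρ (Δ T) - y := by
    simpa [hL, hπ₂, T] using dvd_lift_sub_lid_map π₁ π₂ ε.toLinearMap (hdvd π₁ hπ₁) (Δ T)
  have hzx : y ∣ ρ (Δ T) - x := by
    simpa [hR, hπ₁, T] using dvd_lift_sub_rid_map π₁ π₂ ε.toLinearMap (hdvd π₂ hπ₂) (Δ T)
  apply hxy
  rw [← pow_succ_eq_of_dvd_sub hx hy hzy hzx, ← map_pow, ← map_pow, ← hn,
    NCM.TgM_pow_eq_zero, map_zero, map_zero]

open TensorProduct in
/-- For `k` a field of characteristic zero and `M` a generalized Coxeter matrix, the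
algebra `NC(M)` admits no bialgebra structure: there is no algebra-homomorphism
coproduct `Δ` with a counit `ε` satisfying the counit axioms. -/
theorem NCM_no_bialgebra (k : Type) [Field k] [CharZero k]
    (I : Type) [Fintype I] [Nonempty I] (M : I → I → ℕ)
    (hsymm : ∀ i j, M i j = M j i) (hdiag : ∀ i, 2 ≤ M i i)
    (hoff : ∀ i j, i ≠ j → M i j = 0 ∨ 2 ≤ M i j) :
    ¬ ∃ (Δ : NCM k M →ₐ[k] NCM k M ⊗[k] NCM k M) (ε : NCM k M →ₐ[k] k),
        (∀ x : NCM k M,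
          TensorProduct.lid k (NCM k M)
            (TensorProduct.map ε.toLinearMap LinearMap.id (Δ x)) = x) ∧
        (∀ x : NCM k M,
          TensorProduct.rid k (NCM k M)
            (TensorProduct.map LinearMap.id ε.toLinearMap (Δ x)) = x) :=
  NCM_no_bialgebra_general k I M hdiag hoff
end

section
/- Let M be a generalized Coxeter matrix with m_{ij} odd for some i ≠ j. Then in the generalized Coxeter group W(M), the generators s_i and s_j are conjugate; consequently s_i^g = s_j^g = 1 where g = gcd(m_{ii}, m_{jj}). In particular, if m_{ii} and m_{jj} are coprime, then s_i = s_j = 1 in W(M). -/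
section altProd

variable {A : Type} [Monoid A] (x y : A)

lemma altProd_succ (n : ℕ) :
    altProd x y (n + 1) = altProd x y n * if n % 2 = 0 then x else y := by
  simp [altProd, List.range_succ]

lemma altProd_two_mul (k : ℕ) : altProd x y (2 * k) = (x * y) ^ k := by
  induction k with
  | zero => simp [altProd]
  | succ k ih =>
    rw [Nat.mul_succ, altProd_succ, altProd_succ, ih, pow_succ, mul_assoc]
    simp [Nat.add_mod]

lemma altProd_two_mul_add_one (k : ℕ) : altProd x y (2 * k + 1) = (x * y) ^ k * x := by
  simp [altProd_succ, altProd_two_mul]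

end altProd

lemma isConj_of_altProd_odd_eq {G : Type} [Group G] {x y : G} {k : ℕ}
    (h : altProd x y (2 * k + 1) = altProd y x (2 * k + 1)) : IsConj x y := by
  rw [altProd_two_mul_add_one, altProd_two_mul_add_one] at h
  have hsemi : SemiconjBy y (x * y) (y * x) := by
    simp only [SemiconjBy, mul_assoc]
  refine isConj_iff.2 ⟨(x * y) ^ k, ?_⟩
  rw [h, ← (hsemi.pow_right k).eq, mul_inv_cancel_right]

lemma IsConj.pow_eq_one_iff {G : Type} [Group G] {x y : G} (h : IsConj x y) (n : ℕ) :
    x ^ n = 1 ↔ y ^ n = 1 :=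
  ⟨fun hx => isConj_one_right.1 (hx ▸ h.pow n), fun hy => isConj_one_left.1 (hy ▸ h.pow n)⟩

lemma IsConj.pow_gcd_eq_one {G : Type} [Group G] {x y : G} (h : IsConj x y) {m n : ℕ}
    (hx : x ^ m = 1) (hy : y ^ n = 1) : x ^ m.gcd n = 1 ∧ y ^ m.gcd n = 1 :=
  ⟨_root_.pow_gcd_eq_one.2 ⟨hx, (h.pow_eq_one_iff n).2 hy⟩,
    _root_.pow_gcd_eq_one.2 ⟨(h.pow_eq_one_iff m).1 hx, hy⟩⟩

theorem odd_bond_conjugate_general (I : Type) (M : I → I → ℕ)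
    (G : Type) [Group G] (s : I → G)
    (hbraid : ∀ i j, i ≠ j → M i j ≠ 0 →
      altProd (s i) (s j) (M i j) = altProd (s j) (s i) (M i j))
    (horder : ∀ i, s i ^ M i i = 1)
    (i j : I) (hij : i ≠ j) (hfin : M i j ≠ 0) (hodd : Odd (M i j)) :
    IsConj (s i) (s j) ∧
    s i ^ Nat.gcd (M i i) (M j j) = 1 ∧ s j ^ Nat.gcd (M i i) (M j j) = 1 ∧
    (Nat.Coprime (M i i) (M j j) → s i = 1 ∧ s j = 1) := by
  obtain ⟨k, hk⟩ := hodd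
  have hconj : IsConj (s i) (s j) :=
    isConj_of_altProd_odd_eq (hk ▸ hbraid i j hij hfin)
  obtain ⟨hi, hj⟩ := hconj.pow_gcd_eq_one (horder i) (horder j)
  refine ⟨hconj, hi, hj, fun hcop => ?_⟩
  rw [hcop.gcd_eq_one, pow_one] at hi hj
  exact ⟨hi, hj⟩

/-- Let `M` be a generalized Coxeter matrix (`M i j = 0` encoding `m_{ij} = ∞`) and
suppose the generators `s i` of the generalized Coxeter group `W(M)` (equivalently,
elements of any group satisfying its defining relations) have `m_{ij}` odd for some
`i ≠ j`. Then `s i` and `s j` are conjugate; consequently `s_i^g = s_j^g = 1` for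
`g = gcd(m_{ii}, m_{jj})`, and if `m_{ii}, m_{jj}` are coprime then `s_i = s_j = 1`. -/
theorem odd_bond_conjugate (I : Type) [Fintype I] (M : I → I → ℕ)
    (hsymm : ∀ i j, M i j = M j i) (hdiag : ∀ i, 2 ≤ M i i)
    (hoff : ∀ i j, i ≠ j → M i j = 0 ∨ 2 ≤ M i j)
    (G : Type) [Group G] (s : I → G)
    (hbraid : ∀ i j, i ≠ j → M i j ≠ 0 →
      altProd (s i) (s j) (M i j) = altProd (s j) (s i) (M i j))
    (horder : ∀ i, s i ^ M i i = 1)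
    (i j : I) (hij : i ≠ j) (hfin : M i j ≠ 0) (hodd : Odd (M i j)) :
    IsConj (s i) (s j) ∧
    s i ^ Nat.gcd (M i i) (M j j) = 1 ∧ s j ^ Nat.gcd (M i i) (M j j) = 1 ∧
    (Nat.Coprime (M i i) (M j j) → s i = 1 ∧ s j = 1) :=
  odd_bond_conjugate_general I M G s hbraid horder i j hij hfin hodd
end

section
/- For d > 2, the k-rank of NC_A(n,d), namely n!(1 + n(d-1)), strictly exceeds the order of the corresponding generalized Coxeter group W(M_{n,d}), which equals (n+1)! if d is even and 1 if d is odd. -/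
universe u

/-- Auxiliary descending words `eWord t n m = t n * t (n-1) * ⋯ * t (n-m+1)`. -/
def eWord {G : Type u} [Group G] (t : ℕ → G) (n : ℕ) : ℕ → G
  | 0 => 1
  | (m+1) => eWord t n m * t (n - m)

/-- Abstract counting: a group generated by `n` "type-A" involutions has at most `(n+1)!`
elements (witnessed by a covering finset). -/
theorem gc_cover (n : ℕ) : ∀ (G : Type u) [Group G] (t : ℕ → G),
    (∀ i, i < n → t i * t i = 1) →
    (∀ i, i + 1 < n → t i * t (i+1) * t i = t (i+1) * t i * t (i+1)) →
    (∀ i j, i + 1 < j → j < n → t i * t j = t j * t i) →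
    Subgroup.closure (t '' Set.Iio n) = ⊤ →
    ∃ S : Finset G, (∀ g, g ∈ S) ∧ S.card ≤ (n+1).factorial := by
  induction n with
  | zero =>
    intro G _ t _ _ _ hgen
    classical
    refine ⟨{1}, fun g => ?_, by simp [Nat.factorial]⟩
    have h0 : (Set.Iio 0 : Set ℕ) = ∅ := by ext x; simp
    rw [h0, Set.image_empty, Subgroup.closure_empty] at hgen
    have : g ∈ (⊥ : Subgroup G) := hgen ▸ Subgroup.mem_top g
    simp [Subgroup.mem_bot.mp this]
  | succ n ih =>
    intro G _ t h2 hbraid hcomm hgen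
    classical
    set H : Subgroup G := Subgroup.closure (t '' Set.Iio n) with hH
    have htH : ∀ i, i < n → t i ∈ H := fun i hi =>
      Subgroup.subset_closure ⟨i, hi, rfl⟩
    set t' : ℕ → ↥H := fun i => if h : i < n then ⟨t i, htH i h⟩ else 1 with ht'
    have ht'coe : ∀ i, i < n → ((t' i : G)) = t i := by
      intro i hi; simp [ht', hi]
    have h2' : ∀ i, i < n → t' i * t' i = 1 := by
      intro i hi
      apply Subtype.ext
      simp only [MulMemClass.coe_mul, OneMemClass.coe_one, ht'coe i hi]
      exact h2 i (by omega)
    have hbraid' : ∀ i, i + 1 < n → t' i * t' (i+1) * t' i = t' (i+1) * t' i * t' (i+1) := by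
      intro i hi
      apply Subtype.ext
      simp only [MulMemClass.coe_mul, ht'coe i (by omega), ht'coe (i+1) (by omega)]
      exact hbraid i (by omega)
    have hcomm' : ∀ i j, i + 1 < j → j < n → t' i * t' j = t' j * t' i := by
      intro i j hij hj
      apply Subtype.ext
      simp only [MulMemClass.coe_mul, ht'coe i (by omega), ht'coe j hj]
      exact hcomm i j hij (by omega)
    have hgen' : Subgroup.closure (t' '' Set.Iio n) = ⊤ := by
      apply Subgroup.map_injective H.subtype_injective
      rw [MonoidHom.map_closure, ← Set.image_comp]
      have himg : (H.subtype ∘ t') '' Set.Iio n = t '' Set.Iio n :=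
        Set.image_congr fun i hi => by simpa using ht'coe i hi
      rw [himg, ← MonoidHom.range_eq_map, Subgroup.range_subtype]
    obtain ⟨SH, hSHcov, hSHcard⟩ := ih ↥H t' h2' hbraid' hcomm' hgen'
    set e : ℕ → G := eWord t n with he
    have he0 : e 0 = 1 := rfl
    have heS : ∀ m, e (m+1) = e m * t (n - m) := fun m => rfl
    have L1 : ∀ m i, i + m < n → t i * e m = e m * t i := by
      intro m
      induction m with
      | zero => intro i _; simp [he0]
      | succ m ihm =>
        intro i hi
        rw [heS, ← mul_assoc, ihm i (by omega), mul_assoc, mul_assoc]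
        congr 1
        exact hcomm i (n - m) (by omega) (by omega)
    have L2 : ∀ m i, m ≤ n + 1 → n + 1 < i + m → i ≤ n → e m * t i = t (i-1) * e m := by
      intro m
      induction m with
      | zero => intro i _ hi1 hi2; omega
      | succ m ihm =>
        intro i hm hi1 hi2
        by_cases hA : i + m = n + 1
        · -- braid case : i = n - m + 1, here m = k+1 with i = n - k
          obtain ⟨k, rfl⟩ : ∃ k, m = k + 1 := ⟨m - 1, by omega⟩
          have hb := hbraid (i-1) (by omega)
          rw [show i - 1 + 1 = i by omega] at hb
          have hcm : t (i-1) * e k = e k * t (i-1) := L1 k (i-1) (by omega)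
          rw [heS, heS, show n - (k+1) = i - 1 by omega, show n - k = i by omega]
          calc e k * t i * t (i-1) * t i
              = e k * (t (i-1) * t i * t (i-1)) := by rw [hb]; group
            _ = t (i-1) * (e k * t i * t (i-1)) := by
                rw [show e k * (t (i-1) * t i * t (i-1)) = e k * t (i-1) * (t i * t (i-1)) by group,
                   ← hcm]
                group
        · -- commuting case
          have hc : t (n-m) * t i = t i * t (n-m) := hcomm (n-m) i (by omega) (by omega)
          have hmm := ihm i (by omega) (by omega) hi2
          calc e (m+1) * t i = e m * (t (n-m) * t i) := by rw [heS]; group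
            _ = e m * t i * t (n-m) := by rw [hc]; group
            _ = t (i-1) * e m * t (n-m) := by rw [hmm]
            _ = t (i-1) * e (m+1) := by rw [heS]; group
    -- stability of the coset union under right multiplication by generators
    have key : ∀ (g : G) (i : ℕ), i < n + 1 →
        (∃ h ∈ H, ∃ m ≤ n + 1, g = h * e m) →
        (∃ h ∈ H, ∃ m ≤ n + 1, g * t i = h * e m) := by
      rintro g i hi ⟨h, hh, m, hm, rfl⟩
      rcases lt_trichotomy (i + m) n with hc | hc | hc
      · refine ⟨h * t i, H.mul_mem hh (htH i (by omega)), m, hm, ?_⟩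
        rw [mul_assoc, ← L1 m i (by omega)]
        group
      · refine ⟨h, hh, m + 1, by omega, ?_⟩
        rw [heS, show n - m = i by omega]
        group
      · by_cases hc2 : i + m = n + 1
        · obtain ⟨k, rfl⟩ : ∃ k, m = k + 1 := ⟨m - 1, by omega⟩
          refine ⟨h, hh, k, by omega, ?_⟩
          rw [heS, show n - k = i by omega,
            show h * (e k * t i) * t i = h * (e k * (t i * t i)) by group, h2 i (by omega),
            mul_one]
        · have hx1 : n + 1 < i + m := by omega
          have hx2 : i ≤ n := by omega
          refine ⟨h * t (i-1), H.mul_mem hh (htH (i-1) (by omega)), m, hm, ?_⟩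
          rw [mul_assoc, L2 m i hm hx1 hx2]
          group
    -- every element lies in the coset union
    have cover : ∀ g : G, ∃ h ∈ H, ∃ m ≤ n + 1, g = h * e m := by
      have listcase : ∀ l : List G, (∀ y ∈ l, y ∈ (t '' Set.Iio (n+1)) ∪ (t '' Set.Iio (n+1))⁻¹) →
          ∃ h ∈ H, ∃ m ≤ n + 1, l.prod = h * e m := by
        intro l
        induction l using List.reverseRecOn with
        | nil => exact fun _ => ⟨1, H.one_mem, 0, by omega, by simp [he0]⟩
        | append_singleton l a ihl =>
          intro hl
          obtain ⟨h, hh, m, hm, hrep⟩ := ihl (fun y hy => hl y (by simp [hy]))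
          have ha : ∃ i < n + 1, a = t i := by
            rcases hl a (by simp) with ⟨i, hi, rfl⟩ | hmem
            · exact ⟨i, hi, rfl⟩
            · obtain ⟨i, hi, hia⟩ := hmem
              have hinv : (t i)⁻¹ = t i := inv_eq_of_mul_eq_one_right (h2 i hi)
              exact ⟨i, hi, by rw [← hinv, hia, inv_inv]⟩
          obtain ⟨i, hi, rfl⟩ := ha
          rw [List.prod_append, List.prod_singleton]
          exact key _ i hi ⟨h, hh, m, hm, hrep⟩
      intro g
      have hg : g ∈ Subgroup.closure (t '' Set.Iio (n+1)) := hgen ▸ Subgroup.mem_top g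
      have hg' : g ∈ Submonoid.closure ((t '' Set.Iio (n+1)) ∪ (t '' Set.Iio (n+1))⁻¹) := by
        rw [← Subgroup.closure_toSubmonoid]; exact hg
      obtain ⟨l, hl, rfl⟩ := Submonoid.exists_list_of_mem_closure hg'
      exact listcase l hl
    -- assemble the covering finset
    refine ⟨((SH.image (fun h : ↥H => (h : G))) ×ˢ Finset.range (n+2)).image
        (fun p => p.1 * e p.2), ?_, ?_⟩
    · intro g
      obtain ⟨h, hh, m, hm, rfl⟩ := cover g
      refine Finset.mem_image.2 ⟨(h, m), ?_, rfl⟩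
      refine Finset.mem_product.2 ⟨Finset.mem_image.2 ⟨⟨h, hh⟩, hSHcov _, rfl⟩, ?_⟩
      exact Finset.mem_range.2 (by omega)
    · calc (((SH.image (fun h : ↥H => (h : G))) ×ˢ Finset.range (n+2)).image
            (fun p => p.1 * e p.2)).card
          ≤ ((SH.image (fun h : ↥H => (h : G))) ×ˢ Finset.range (n+2)).card :=
            Finset.card_image_le
        _ = (SH.image (fun h : ↥H => (h : G))).card * (n+2) := by
            rw [Finset.card_product, Finset.card_range]
        _ ≤ (n+1).factorial * (n+2) :=
            Nat.mul_le_mul_right _ (le_trans Finset.card_image_le hSHcard)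
        _ = (n+1+1).factorial := by
            rw [Nat.factorial_succ (n+1), Nat.mul_comm]


/-- Relators for the generalized Coxeter group `W(M_{n,d})` of type `A_n` with
diagonal `(2, …, 2, d)` (generators `s_1, …, s_n`, 0-indexed by `Fin n`): type-`A_n`
braid relations, `s_i^2 = 1` for `i < n`, and `s_n^d = 1`. -/
def gcRels (n d : ℕ) : Set (FreeGroup (Fin n)) :=
  {x | (∃ i j : Fin n, (i : ℕ) + 1 = j ∧
          x = FreeGroup.of i * FreeGroup.of j * FreeGroup.of i *
              (FreeGroup.of j * FreeGroup.of i * FreeGroup.of j)⁻¹) ∨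
       (∃ i j : Fin n, (i : ℕ) + 1 < j ∧
          x = FreeGroup.of i * FreeGroup.of j * (FreeGroup.of j * FreeGroup.of i)⁻¹) ∨
       (∃ i : Fin n, (i : ℕ) + 1 < n ∧ x = FreeGroup.of i ^ 2) ∨
       (∃ i : Fin n, (i : ℕ) + 1 = n ∧ x = FreeGroup.of i ^ d)}

/-- The generalized Coxeter group `W(M_{n,d})`. -/
abbrev Wgen (n d : ℕ) := PresentedGroup (gcRels n d)


section WgenRels

variable {n d : ℕ}

theorem wgen_rel_one {r : FreeGroup (Fin n)} (hr : r ∈ gcRels n d) :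
    PresentedGroup.mk (gcRels n d) r = 1 :=
  (QuotientGroup.eq_one_iff r).mpr (Subgroup.subset_normalClosure hr)

theorem wgen_braid {i j : Fin n} (h : (i : ℕ) + 1 = j) :
    (PresentedGroup.of i : Wgen n d) * PresentedGroup.of j * PresentedGroup.of i =
      PresentedGroup.of j * PresentedGroup.of i * PresentedGroup.of j := by
  have h1 := wgen_rel_one (d := d) (Or.inl ⟨i, j, h, rfl⟩)
  rw [map_mul, map_mul, map_inv, map_mul, map_mul, mul_inv_eq_one] at h1
  exact h1

theorem wgen_comm {i j : Fin n} (h : (i : ℕ) + 1 < j) :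
    (PresentedGroup.of i : Wgen n d) * PresentedGroup.of j =
      PresentedGroup.of j * PresentedGroup.of i := by
  have h1 := wgen_rel_one (d := d) (Or.inr (Or.inl ⟨i, j, h, rfl⟩))
  rw [map_mul, map_inv, map_mul, mul_inv_eq_one] at h1
  exact h1

theorem wgen_sq {i : Fin n} (h : (i : ℕ) + 1 < n) :
    (PresentedGroup.of i : Wgen n d) * PresentedGroup.of i = 1 := by
  have h1 := wgen_rel_one (d := d) (Or.inr (Or.inr (Or.inl ⟨i, h, rfl⟩)))
  rw [map_pow, pow_two] at h1
  exact h1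

theorem wgen_pow_d {i : Fin n} (h : (i : ℕ) + 1 = n) :
    (PresentedGroup.of i : Wgen n d) ^ d = 1 := by
  have h1 := wgen_rel_one (d := d) (Or.inr (Or.inr (Or.inr ⟨i, h, rfl⟩)))
  rw [map_pow] at h1
  exact h1

/-- If `a` is an involution and satisfies the braid relation with `b`, then `b` is an
involution (it is conjugate to `a`). -/
theorem sq_of_braid {G : Type*} [Group G] {a b : G} (ha : a * a = 1)
    (hb : a * b * a = b * a * b) : b * b = 1 := by
  have h1 : (a * b) * a * (a * b)⁻¹ = b := by
    rw [mul_inv_rev]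
    calc a * b * a * (b⁻¹ * a⁻¹) = (a * b * a) * b⁻¹ * a⁻¹ := by group
      _ = (b * a * b) * b⁻¹ * a⁻¹ := by rw [hb]
      _ = b := by group
  calc b * b = ((a * b) * a * (a * b)⁻¹) * ((a * b) * a * (a * b)⁻¹) := by rw [h1]
    _ = (a * b) * (a * a) * (a * b)⁻¹ := by group
    _ = 1 := by rw [ha]; group

/-- The last generator squares to `1` in `W(M_{n,d})` whenever `n ≥ 2`. -/
theorem wgen_last_sq (hn : 2 ≤ n) :
    (PresentedGroup.of (⟨n - 1, by omega⟩ : Fin n) : Wgen n d) *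
      PresentedGroup.of (⟨n - 1, by omega⟩ : Fin n) = 1 := by
  have hbr := wgen_braid (d := d) (i := (⟨n - 2, by omega⟩ : Fin n))
    (j := (⟨n - 1, by omega⟩ : Fin n)) (by simp; omega)
  exact sq_of_braid (wgen_sq (by simp; omega)) hbr

end WgenRels
section OddTrivial

variable {n d : ℕ}

/-- In any group, an involution whose order divides an odd number is trivial. -/
theorem eq_one_of_sq_of_pow_odd {G : Type*} [Group G] {a : G} (h2 : a * a = 1) {d : ℕ}
    (hd : a ^ d = 1) (hodd : Odd d) : a = 1 := by
  obtain ⟨k, rfl⟩ := hodd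
  rw [pow_succ, pow_mul, pow_two, h2, one_pow, one_mul] at hd
  exact hd

/-- For odd `d > 2` (in fact any odd `d`), the group `W(M_{n,d})` is trivial. -/
theorem wgen_odd_all_one (hn : 2 ≤ n) (hodd : ¬ Even d) (g : Wgen n d) : g = 1 := by
  have top2 : (PresentedGroup.of ⟨n - 1, by omega⟩ : Wgen n d) *
      PresentedGroup.of ⟨n - 1, by omega⟩ = 1 := wgen_last_sq hn
  have topd : (PresentedGroup.of ⟨n - 1, by omega⟩ : Wgen n d) ^ d = 1 :=
    wgen_pow_d (by simp; omega)
  have top1 : (PresentedGroup.of ⟨n - 1, by omega⟩ : Wgen n d) = 1 :=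
    eq_one_of_sq_of_pow_odd top2 topd (Nat.not_even_iff_odd.mp hodd)
  have all1 : ∀ k : ℕ, ∀ i : Fin n, (i : ℕ) + k + 1 = n →
      (PresentedGroup.of i : Wgen n d) = 1 := by
    intro k
    induction k with
    | zero =>
      intro i hi
      have : i = ⟨n - 1, by omega⟩ := by
        apply Fin.ext; simp; omega
      rw [this]; exact top1
    | succ k ihk =>
      intro i hi
      have hlt : (i : ℕ) + 1 < n := by omega
      have hjval : (i : ℕ) + 1 = ((⟨(i : ℕ) + 1, hlt⟩ : Fin n) : ℕ) := rfl
      have hj1 : (PresentedGroup.of (⟨(i : ℕ) + 1, hlt⟩ : Fin n) : Wgen n d) = 1 :=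
        ihk _ (by simp; omega)
      have hbr := wgen_braid (d := d) hjval
      rw [hj1, mul_one, one_mul, mul_one] at hbr
      exact mul_left_cancel (hbr.trans (mul_one _).symm)
  have hall : ∀ i : Fin n, (PresentedGroup.of i : Wgen n d) = 1 := by
    intro i
    exact all1 (n - 1 - (i : ℕ)) i (by omega)
  have := PresentedGroup.generated_by (gcRels n d) ⊥
    (fun j => by rw [Subgroup.mem_bot]; exact hall j) g
  exact Subgroup.mem_bot.mp this

end OddTrivial

section EvenCase

variable {n d : ℕ}

/-- The covering bound for `W(M_{n,d})` with `n ≥ 2` (any `d`): at most `(n+1)!` elements. -/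
theorem wgen_cover (hn : 2 ≤ n) :
    ∃ S : Finset (Wgen n d), (∀ g, g ∈ S) ∧ S.card ≤ (n + 1).factorial := by
  classical
  set t : ℕ → Wgen n d := fun i => if h : i < n then PresentedGroup.of ⟨i, h⟩ else 1 with ht
  have htval : ∀ i (h : i < n), t i = PresentedGroup.of ⟨i, h⟩ := by
    intro i h; simp [ht, h]
  have h2 : ∀ i, i < n → t i * t i = 1 := by
    intro i hi
    rw [htval i hi]
    rcases Nat.lt_or_ge (i + 1) n with h | h
    · exact wgen_sq h
    · have hieq : i = n - 1 := by omega
      have : (⟨i, hi⟩ : Fin n) = ⟨n - 1, by omega⟩ := by apply Fin.ext; simp [hieq]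
      rw [this]
      exact wgen_last_sq hn
  have hbraid : ∀ i, i + 1 < n → t i * t (i+1) * t i = t (i+1) * t i * t (i+1) := by
    intro i hi
    rw [htval i (by omega), htval (i+1) hi]
    exact wgen_braid rfl
  have hcomm : ∀ i j, i + 1 < j → j < n → t i * t j = t j * t i := by
    intro i j hij hj
    rw [htval i (by omega), htval j hj]
    exact wgen_comm hij
  have hgen : Subgroup.closure (t '' Set.Iio n) = ⊤ := by
    have himg : t '' Set.Iio n = Set.range (PresentedGroup.of : Fin n → Wgen n d) := by
      ext g
      constructor
      · rintro ⟨i, hi, rfl⟩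
        exact ⟨⟨i, hi⟩, (htval i hi).symm⟩
      · rintro ⟨i, rfl⟩
        exact ⟨(i : ℕ), i.isLt, htval (i : ℕ) i.isLt ▸ by simp⟩
    rw [himg]
    exact PresentedGroup.closure_range_of _
  exact gc_cover n (Wgen n d) t h2 hbraid hcomm hgen

/-- For even `d`, there is a surjection from `W(M_{n,d})` onto `Perm (Fin (n+1))`. -/
theorem wgen_to_perm (heven : Even d) :
    ∃ φ : Wgen n d →* Equiv.Perm (Fin (n + 1)), Function.Surjective φ := by
  classical
  set f : Fin n → Equiv.Perm (Fin (n + 1)) := fun i => Equiv.swap i.castSucc i.succ with hf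
  have hswap_braid : ∀ i j : Fin n, (i : ℕ) + 1 = j → f i * f j * f i = f j * f i * f j := by
    intro i j hij
    have hbc : (i.succ : Fin (n+1)) = j.castSucc := by
      apply Fin.ext; simp [← hij]
    set a : Fin (n+1) := i.castSucc
    set b : Fin (n+1) := i.succ
    set c : Fin (n+1) := j.succ
    have hav : (a : ℕ) = i := rfl
    have hbv : (b : ℕ) = (i : ℕ) + 1 := rfl
    have hcv : (c : ℕ) = (j : ℕ) + 1 := rfl
    have hab : a ≠ b := by simp [Fin.ext_iff, hav, hbv]
    have hbc' : b ≠ c := by simp [Fin.ext_iff, hbv, hcv]; omega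
    have hac : a ≠ c := by simp [Fin.ext_iff, hav, hcv]; omega
    have hfj : f j = Equiv.swap b c := by rw [hf]; simp only []; rw [← hbc]
    show Equiv.swap a b * f j * Equiv.swap a b = f j * Equiv.swap a b * f j
    rw [hfj]
    calc Equiv.swap a b * Equiv.swap b c * Equiv.swap a b
        = Equiv.swap b a * Equiv.swap c b * Equiv.swap b a := by
          rw [Equiv.swap_comm a b, Equiv.swap_comm b c]
      _ = Equiv.swap a c := Equiv.swap_mul_swap_mul_swap (Ne.symm hbc') hac.symm
      _ = Equiv.swap c a := Equiv.swap_comm a c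
      _ = Equiv.swap b c * Equiv.swap a b * Equiv.swap b c :=
          (Equiv.swap_mul_swap_mul_swap hab hac).symm
  have hswap_comm : ∀ i j : Fin n, (i : ℕ) + 1 < j → f i * f j = f j * f i := by
    intro i j hij
    set a : Fin (n+1) := i.castSucc
    set b : Fin (n+1) := i.succ
    set c : Fin (n+1) := j.castSucc
    set e : Fin (n+1) := j.succ
    have hac : a ≠ c := by simp [Fin.ext_iff, a, c]; omega
    have hae : a ≠ e := by simp [Fin.ext_iff, a, e]; omega
    have hbc : b ≠ c := by simp [Fin.ext_iff, b, c]; omega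
    have hbe : b ≠ e := by simp [Fin.ext_iff, b, e]; omega
    have h := Equiv.swap_apply_apply (Equiv.swap c e) a b
    rw [Equiv.swap_apply_of_ne_of_ne hac hae, Equiv.swap_apply_of_ne_of_ne hbc hbe] at h
    show Equiv.swap a b * Equiv.swap c e = Equiv.swap c e * Equiv.swap a b
    nth_rewrite 1 [h]
    group
  have hmain : ∀ r ∈ gcRels n d, FreeGroup.lift f r = 1 := by
    intro r hr
    rcases hr with ⟨i, j, hij, rfl⟩ | ⟨i, j, hij, rfl⟩ | ⟨i, hi, rfl⟩ | ⟨i, hi, rfl⟩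
    · rw [map_mul, map_mul, map_inv, map_mul, map_mul, mul_inv_eq_one]
      simp only [FreeGroup.lift_apply_of]
      exact hswap_braid i j hij
    · rw [map_mul, map_inv, map_mul, mul_inv_eq_one]
      simp only [FreeGroup.lift_apply_of]
      exact hswap_comm i j hij
    · rw [map_pow, pow_two]
      simp only [FreeGroup.lift_apply_of]
      exact Equiv.swap_mul_self _ _
    · rw [map_pow]
      simp only [FreeGroup.lift_apply_of]
      obtain ⟨k, hk⟩ := heven
      rw [hk, show k + k = 2 * k by ring, pow_mul, pow_two, Equiv.swap_mul_self, one_pow]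
  refine ⟨PresentedGroup.toGroup hmain, ?_⟩
  have hrange : Submonoid.closure (Set.range fun i : Fin n => Equiv.swap i.castSucc i.succ) ≤
      (MonoidHom.range (PresentedGroup.toGroup hmain)).toSubmonoid := by
    apply Submonoid.closure_le.mpr
    rintro _ ⟨i, rfl⟩
    exact ⟨PresentedGroup.of i, PresentedGroup.toGroup.of hmain⟩
  intro σ
  have hσ : σ ∈ Submonoid.closure
      (Set.range fun i : Fin n => Equiv.swap i.castSucc i.succ) := by
    rw [Equiv.Perm.mclosure_swap_castSucc_succ n]; trivial
  exact hrange hσ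

end EvenCase

/-- For `d > 2`, the `k`-rank `n!(1 + n(d-1))` of `NC_A(n,d)` strictly exceeds the
order of the generalized Coxeter group `W(M_{n,d})`, which equals `(n+1)!` if `d` is
even and `1` if `d` is odd. -/
theorem NCA_rank_exceeds_group_order (n d : ℕ) (hn : 2 ≤ n) (hd : 2 < d) :
    Nat.card (Wgen n d) = (if Even d then (n + 1).factorial else 1) ∧
    (if Even d then (n + 1).factorial else 1) < n.factorial * (1 + n * (d - 1)) := by
  have hfac2 : 2 ≤ n.factorial := le_trans (by norm_num) (Nat.factorial_le hn)
  by_cases heven : Even d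
  · rw [if_pos heven]
    have hd4 : 4 ≤ d := by obtain ⟨k, hk⟩ := heven; omega
    have hnd : n * 3 ≤ n * (d - 1) := Nat.mul_le_mul_left n (by omega)
    obtain ⟨S, hScov, hScard⟩ := wgen_cover (d := d) hn
    have hufin : (Set.univ : Set (Wgen n d)).Finite :=
      S.finite_toSet.subset (fun g _ => hScov g)
    haveI hfin : Finite (Wgen n d) := Set.finite_univ_iff.mp hufin
    have hle : Nat.card (Wgen n d) ≤ (n + 1).factorial := by
      calc Nat.card (Wgen n d) = (Set.univ : Set (Wgen n d)).ncard := (Set.ncard_univ _).symm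
        _ ≤ (↑S : Set (Wgen n d)).ncard :=
            Set.ncard_le_ncard (fun g _ => hScov g) S.finite_toSet
        _ = S.card := Set.ncard_coe_finset S
        _ ≤ (n + 1).factorial := hScard
    obtain ⟨φ, hφ⟩ := wgen_to_perm (n := n) (d := d) heven
    have hge : (n + 1).factorial ≤ Nat.card (Wgen n d) := by
      have := Nat.card_le_card_of_surjective φ hφ
      rwa [Nat.card_eq_fintype_card, Fintype.card_perm, Fintype.card_fin] at this
    constructor
    · exact le_antisymm hle hge
    · rw [Nat.factorial_succ]
      have hlt : n + 1 < 1 + n * (d - 1) := by omega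
      calc (n + 1) * n.factorial = n.factorial * (n + 1) := Nat.mul_comm _ _
        _ < n.factorial * (1 + n * (d - 1)) :=
            mul_lt_mul_of_pos_left hlt (Nat.factorial_pos n)
  · rw [if_neg heven]
    constructor
    · haveI : Unique (Wgen n d) :=
        { default := 1, uniq := fun g => wgen_odd_all_one hn heven g }
      exact Nat.card_unique
    · have : 1 < n.factorial := by omega
      calc 1 < n.factorial := this
        _ = n.factorial * 1 := (Nat.mul_one _).symm
        _ ≤ n.factorial * (1 + n * (d - 1)) := Nat.mul_le_mul_left _ (by omega)
end

section
/- There is a k-algebra anti-automorphism θ of NC_A(n,d) fixing each generator T_i, and θ fixes each of the primitive elements T_{w'_∘} T_n^k T_{n-1} ⋯ T_1 for 1 ≤ k ≤ d-1. -/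
/-- A fixed reduced word for the longest element `w'_∘` of `S_n`:
`(1)(21)(321)⋯(n-1 ⋯ 2 1)`. -/
def longestWord (n : ℕ) : List ℕ :=
  (List.range n).flatMap fun j => (List.range' 1 j).reverse

/-- The candidate primitive elements `T_{w'_∘} T_n^{k_0+1} T_{n-1} ⋯ T_1` of
`NC_A(n,d)`, for `k_0 : Fin (d-1)`. -/
noncomputable def primFam (k : Type) [CommRing k] (n d : ℕ) (k0 : Fin (d - 1)) :
    NCA k n d :=
  TwOf k n d (longestWord n) * Tg k n d n ^ ((k0 : ℕ) + 1) * descT k n d 1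

/-! Each defining relation of `NC_A(n,d)` is sent by word reversal to a consequence of the
relations (the braid relation is a palindrome, the commutation relation is reversed into
itself, and powers of a generator are palindromes), so reversal of words descends to an involutive
anti-automorphism `θ` fixing every `T_i`. Writing `T_{w'_∘} = W · A` with `W` the longest word of
`S_{n-1}` and `A = T_{n-1} ⋯ T_1`, `T_n` commutes with `W` and `T_1 ⋯ T_{n-1} · W = W · A`
(induction on `n`), hence `θ(W A T_n^k A) = T_1 ⋯ T_{n-1} T_n^k W A = W A T_n^k A`. -/

open MulOpposite

namespace RingQuot

variable {R X : Type*} [CommSemiring R] {r : FreeAlgebra R X → FreeAlgebra R X → Prop}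
  (hr : ∀ a b, r a b → mkAlgHom R r (star a) = mkAlgHom R r (star b))

noncomputable def reverseHom : RingQuot r →ₐ[R] (RingQuot r)ᵐᵒᵖ :=
  liftAlgHom R ⟨(AlgHom.op (mkAlgHom R r)).comp FreeAlgebra.starHom.toAlgHom,
    fun a b h => congrArg op (hr a b h)⟩

theorem reverseHom_mkAlgHom (a : FreeAlgebra R X) :
    reverseHom hr (mkAlgHom R r a) = op (mkAlgHom R r (star a)) := by
  simp [reverseHom, liftAlgHom_mkAlgHom_apply, FreeAlgebra.starHom]

theorem unop_reverseHom_involutive :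
    Function.Involutive fun x => unop (reverseHom hr x) := by
  intro x
  obtain ⟨a, rfl⟩ := mkAlgHom_surjective R r x
  simp only [reverseHom_mkAlgHom, unop_op, star_star]

noncomputable def reverse : RingQuot r ≃ₗ[R] RingQuot r :=
  LinearEquiv.ofInvolutive
    ((opLinearEquiv R).symm.toLinearMap ∘ₗ (reverseHom hr).toLinearMap)
    (unop_reverseHom_involutive hr)

theorem reverse_apply (x : RingQuot r) : reverse hr x = unop (reverseHom hr x) := rfl

theorem reverse_mkAlgHom (a : FreeAlgebra R X) :
    reverse hr (mkAlgHom R r a) = mkAlgHom R r (star a) := by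
  rw [reverse_apply, reverseHom_mkAlgHom, unop_op]

theorem reverse_one : reverse hr 1 = 1 := by
  rw [reverse_apply, map_one, unop_one]

theorem reverse_mul (x y : RingQuot r) : reverse hr (x * y) = reverse hr y * reverse hr x := by
  simp only [reverse_apply, map_mul, unop_mul]

theorem reverse_pow (x : RingQuot r) (m : ℕ) : reverse hr (x ^ m) = reverse hr x ^ m := by
  simp only [reverse_apply, map_pow, unop_pow]

end RingQuot

section NilCoxeter

variable (k : Type) [CommRing k] (n d : ℕ)

theorem mkAlgHom_star_eq_of_NCRel {a b : FreeAlgebra k (Fin n)} (h : NCRel k n d a b) :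
    RingQuot.mkAlgHom k (NCRel k n d) (star a) = RingQuot.mkAlgHom k (NCRel k n d) (star b) := by
  have hrel := RingQuot.mkAlgHom_rel k h
  cases h with
  | braid | sq | last =>
    simpa only [star_mul, star_pow, star_zero, FreeAlgebra.star_ι, mul_assoc] using hrel
  | comm => simpa only [star_mul, FreeAlgebra.star_ι] using hrel.symm

noncomputable abbrev ncaReverse : NCA k n d ≃ₗ[k] NCA k n d :=
  RingQuot.reverse fun _ _ => mkAlgHom_star_eq_of_NCRel k n d

theorem ncaReverse_Tg (j : ℕ) : ncaReverse k n d (Tg k n d j) = Tg k n d j := by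
  unfold Tg
  split_ifs
  · rw [RingQuot.reverse_mkAlgHom, FreeAlgebra.star_ι]
  · exact RingQuot.reverse_one _

theorem TwOf_append (l₁ l₂ : List ℕ) :
    TwOf k n d (l₁ ++ l₂) = TwOf k n d l₁ * TwOf k n d l₂ := by
  rw [TwOf, List.map_append, List.prod_append, TwOf, TwOf]

theorem TwOf_cons (a : ℕ) (l : List ℕ) : TwOf k n d (a :: l) = Tg k n d a * TwOf k n d l :=
  List.prod_cons

theorem TwOf_singleton (a : ℕ) : TwOf k n d [a] = Tg k n d a :=
  List.prod_singleton

theorem ncaReverse_TwOf (l : List ℕ) :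
    ncaReverse k n d (TwOf k n d l) = TwOf k n d l.reverse := by
  induction l with
  | nil => exact RingQuot.reverse_one _
  | cons a l ih =>
    rw [TwOf_cons, RingQuot.reverse_mul, ih, ncaReverse_Tg, List.reverse_cons, TwOf_append,
      TwOf_singleton]

theorem Tg_commute_Tg {i j : ℕ} (h : i + 1 < j) : Commute (Tg k n d j) (Tg k n d i) := by
  unfold Tg
  split_ifs with hj hi
  · have hij : i - 1 + 1 < j - 1 := by omega
    have hrel := RingQuot.mkAlgHom_rel k
      (NCRel.comm (k := k) (d := d) (⟨i - 1, by omega⟩ : Fin n) (⟨j - 1, by omega⟩ : Fin n) hij)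
    rw [map_mul, map_mul] at hrel
    exact hrel.symm
  all_goals simp

theorem Tg_commute_TwOf {j : ℕ} {l : List ℕ} (hl : ∀ i ∈ l, i + 1 < j) :
    Commute (Tg k n d j) (TwOf k n d l) :=
  Commute.list_prod_right _ _ fun x hx => by
    obtain ⟨i, hi, rfl⟩ := List.mem_map.1 hx
    exact Tg_commute_Tg k n d (hl i hi)

theorem longestWord_succ (m : ℕ) :
    longestWord (m + 1) = longestWord m ++ (List.range' 1 m).reverse := by
  simp [longestWord, List.range_succ]

theorem longestWord_eq_pred_append (m : ℕ) :
    longestWord m = longestWord (m - 1) ++ (List.range' 1 (m - 1)).reverse := by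
  cases m with
  | zero => rfl
  | succ m => exact longestWord_succ m

theorem lt_of_mem_longestWord {m i : ℕ} (h : i ∈ longestWord m) : i < m := by
  simp only [longestWord, List.mem_flatMap, List.mem_reverse, List.mem_range',
    List.mem_range] at h
  omega

theorem TwOf_range'_mul_longestWord (m : ℕ) :
    TwOf k n d (List.range' 1 m) * TwOf k n d (longestWord m) =
      TwOf k n d (longestWord m) * TwOf k n d (List.range' 1 m).reverse := by
  induction m with
  | zero => rfl
  | succ m ih =>
    have hcomm : Commute (Tg k n d (m + 1)) (TwOf k n d (longestWord m)) :=
      Tg_commute_TwOf k n d fun i hi => by have := lt_of_mem_longestWord hi; omega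
    rw [longestWord_succ, List.range'_1_concat, Nat.add_comm 1 m, List.reverse_append,
      TwOf_append, TwOf_append, TwOf_append, List.reverse_singleton, TwOf_singleton]
    calc _ = TwOf k n d (List.range' 1 m) * TwOf k n d (longestWord m)
          * (Tg k n d (m + 1) * TwOf k n d (List.range' 1 m).reverse) := by
          rw [mul_assoc, hcomm.left_comm, ← mul_assoc]
      _ = _ := by rw [ih]

theorem TwOf_reverse_longestWord (m : ℕ) :
    TwOf k n d (longestWord m).reverse = TwOf k n d (longestWord m) := by
  induction m with
  | zero => rfl
  | succ m ih =>
    rw [longestWord_succ, List.reverse_append, List.reverse_reverse, TwOf_append, TwOf_append, ih,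
      TwOf_range'_mul_longestWord]

end NilCoxeter

theorem NCA_anti_automorphism_general (k : Type) [CommRing k] (n d : ℕ) :
    ∃ θ : NCA k n d ≃ₗ[k] NCA k n d,
      θ 1 = 1 ∧ (∀ x y : NCA k n d, θ (x * y) = θ y * θ x) ∧
      (∀ j, 1 ≤ j → j ≤ n → θ (Tg k n d j) = Tg k n d j) ∧
      ∀ k0 : Fin (d - 1), θ (primFam k n d k0) = primFam k n d k0 := by
  refine ⟨ncaReverse k n d, RingQuot.reverse_one _, RingQuot.reverse_mul _,
    fun j _ _ => ncaReverse_Tg k n d j, fun k0 => ?_⟩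
  set W := TwOf k n d (longestWord (n - 1))
  set A := TwOf k n d (List.range' 1 (n - 1)).reverse
  set R := TwOf k n d (List.range' 1 (n - 1))
  set t := Tg k n d n ^ ((k0 : ℕ) + 1)
  have hlongest : TwOf k n d (longestWord n) = W * A := by
    rw [longestWord_eq_pred_append, TwOf_append]
  have hdesc : descT k n d 1 = A := rfl
  have hkey : R * W = W * A := TwOf_range'_mul_longestWord k n d (n - 1)
  have hcomm : Commute t W :=
    (Tg_commute_TwOf k n d fun i hi => by have := lt_of_mem_longestWord hi; omega).pow_left _
  calc ncaReverse k n d (primFam k n d k0)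
      = R * t * (W * A) := by
        rw [primFam, RingQuot.reverse_mul, RingQuot.reverse_mul, RingQuot.reverse_pow,
          ncaReverse_Tg, hdesc, ncaReverse_TwOf, ncaReverse_TwOf, List.reverse_reverse,
          TwOf_reverse_longestWord, hlongest, ← mul_assoc]
    _ = R * W * (t * A) := by rw [mul_assoc, hcomm.left_comm, ← mul_assoc]
    _ = W * A * t * A := by rw [hkey]; simp only [mul_assoc]
    _ = primFam k n d k0 := by rw [primFam, hlongest, hdesc]

/-- `NC_A(n,d)` admits a `k`-algebra anti-automorphism `θ` fixing each generator
`T_i`, and `θ` fixes each primitive element `T_{w'_∘} T_n^k T_{n-1} ⋯ T_1`,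
`1 ≤ k ≤ d-1`. -/
theorem NCA_anti_automorphism (k : Type) [CommRing k] (n d : ℕ)
    (hn : 1 ≤ n) (hd : 2 ≤ d) :
    ∃ θ : NCA k n d ≃ₗ[k] NCA k n d,
      θ 1 = 1 ∧ (∀ x y : NCA k n d, θ (x * y) = θ y * θ x) ∧
      (∀ j, 1 ≤ j → j ≤ n → θ (Tg k n d j) = Tg k n d j) ∧
      ∀ k0 : Fin (d - 1), θ (primFam k n d k0) = primFam k n d k0 :=
  NCA_anti_automorphism_general k n d
end
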